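/- arXiv:2207.08708 — 3 statements merged into one kernel-verified Lean document; each statement's English description precedes it below -/
import Mathlib

section
/- The closed polygonal chain with vertices (4,0), (−1,0), (11/3,7/3), (1/2,11/2), (4,−5), (4,5), (0,1), (0,4), (4,0) is a covering circuit for the grid G_5^2 with exactly 8 edges such that every point of G_5^2 other than (4,0) equals γ(t) for exactly one t ∈ [0,8), while (4,0) equals γ(t) for exactly two values t ∈ [0,8). -/
noncomputable section

/-- Points of the Euclidean plane. -/
abbrev Pt : Type := EuclideanSpace ℝ (Fin 2)

/-- The point `(x, y)` of the plane. -/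
def pt (x y : ℝ) : Pt := WithLp.toLp 2 ![x, y]

/-- The grid `G_n^2 = {0, 1, …, n-1} × {0, 1, …, n-1}` as a subset of the plane. -/
def grid (n : ℕ) : Set Pt :=
  {p | ∃ a b : ℕ, a < n ∧ b < n ∧ p = pt a b}

/-- The parametrization `γ : [0, k] → ℝ²` of the polygonal chain with vertices
`v 0, v 1, …, v k`:  for `t ∈ [i, i+1]`, `γ t = (i+1-t) • v i + (t-i) • v (i+1)`. -/
def chainParam (v : ℕ → Pt) (t : ℝ) : Pt :=
  (1 - (t - (⌊t⌋₊ : ℝ))) • v ⌊t⌋₊ + (t - (⌊t⌋₊ : ℝ)) • v (⌊t⌋₊ + 1)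

/-- `v 0, v 1, …, v k` are the vertices of a polygonal chain with `k` edges:
consecutive vertices are distinct, the `k` edges (as segments) are pairwise
distinct, and no two consecutive edges are collinear (`v (i+2)` never lies on the
line through `v i` and `v (i+1)`). -/
def IsPolyChain (k : ℕ) (v : ℕ → Pt) : Prop :=
  (∀ i < k, v i ≠ v (i + 1)) ∧
  (∀ i < k, ∀ j < k, i ≠ j →
      segment ℝ (v i) (v (i + 1)) ≠ segment ℝ (v j) (v (j + 1))) ∧
  (∀ i, i + 2 ≤ k → v (i + 2) ∉ affineSpan ℝ {v i, v (i + 1)})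

/-- A covering trail for `G_n^2` with `k` edges: a polygonal chain such that every
grid point equals `γ t` for at least one `t ∈ [0, k]`. -/
def IsCoveringTrail (n k : ℕ) (v : ℕ → Pt) : Prop :=
  IsPolyChain k v ∧
  ∀ p ∈ grid n, ∃ t ∈ Set.Icc (0 : ℝ) (k : ℝ), chainParam v t = p

/-- A covering path for `G_n^2` with `k` edges: a covering trail such that every
grid point equals `γ t` for exactly one `t ∈ [0, k]`. -/
def IsCoveringPath (n k : ℕ) (v : ℕ → Pt) : Prop :=
  IsCoveringTrail n k v ∧
  ∀ p ∈ grid n, ∃! t, t ∈ Set.Icc (0 : ℝ) (k : ℝ) ∧ chainParam v t = p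

/-- A covering circuit for `G_n^2` with `k` edges: a covering trail that is closed
(`v 0 = v k`) and whose last and first edges are also non-collinear. -/
def IsCoveringCircuit (n k : ℕ) (v : ℕ → Pt) : Prop :=
  IsCoveringTrail n k v ∧ v 0 = v k ∧
  v 1 ∉ affineSpan ℝ {v (k - 1), v k}

/-- A covering cycle for `G_n^2` with `k` edges: a covering circuit such that every
grid point equals `γ t` for exactly one `t ∈ [0, k)`. -/
def IsCoveringCycle (n k : ℕ) (v : ℕ → Pt) : Prop :=
  IsCoveringCircuit n k v ∧
  ∀ p ∈ grid n, ∃! t, t ∈ Set.Ico (0 : ℝ) (k : ℝ) ∧ chainParam v t = p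

/-- The total (Euclidean) length of the polygonal chain with vertices
`v 0, v 1, …, v k`. -/
def chainLength (k : ℕ) (v : ℕ → Pt) : ℝ :=
  ∑ i ∈ Finset.range k, dist (v i) (v (i + 1))


/-- The vertex sequence of the chain under consideration. -/
def V : ℕ → Pt := fun i => [pt 4 0, pt (-1) 0, pt (11/3) (7/3), pt (1/2) (11/2), pt 4 (-5),
        pt 4 5, pt 0 1, pt 0 4, pt 4 0].getD i (pt 4 0)

lemma hV0 : V 0 = pt 4 0 := rfl
lemma hV1 : V 1 = pt (-1) 0 := rfl
lemma hV2 : V 2 = pt (11/3) (7/3) := rfl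
lemma hV3 : V 3 = pt (1/2) (11/2) := rfl
lemma hV4 : V 4 = pt 4 (-5) := rfl
lemma hV5 : V 5 = pt 4 5 := rfl
lemma hV6 : V 6 = pt 0 1 := rfl
lemma hV7 : V 7 = pt 0 4 := rfl
lemma hV8 : V 8 = pt 4 0 := rfl

lemma pt_eq_iff {a b c d : ℝ} : pt a b = pt c d ↔ a = c ∧ b = d := by
  constructor
  · intro h
    have h0 := congrArg (fun p : Pt => p 0) h
    have h1 := congrArg (fun p : Pt => p 1) h
    simp [pt] at h0 h1; exact ⟨h0, h1⟩
  · rintro ⟨rfl, rfl⟩; rfl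

lemma smul_add_pt (c d x1 y1 x2 y2 : ℝ) :
    c • pt x1 y1 + d • pt x2 y2 = pt (c*x1+d*x2) (c*y1+d*y2) := by
  ext j; fin_cases j <;> simp [pt]

lemma sub_pt (a b c d : ℝ) : pt a b - pt c d = pt (a-c) (b-d) := by
  ext j; fin_cases j <;> simp [pt]

lemma smul_pt (c x y : ℝ) : c • pt x y = pt (c*x) (c*y) := by
  ext j; fin_cases j <;> simp [pt]

lemma floor_nat_add (i : ℕ) (s : ℝ) (h0 : 0 ≤ s) (h1 : s < 1) : ⌊(i:ℝ) + s⌋₊ = i := by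
  rw [Nat.floor_eq_iff (by positivity)]
  refine ⟨by linarith, by push_cast; linarith⟩

lemma evalV' (i : ℕ) (s : ℝ) {t x1 y1 x2 y2 a b : ℝ} (hv1 : V i = pt x1 y1)
    (hv2 : V (i+1) = pt x2 y2) (h0 : 0 ≤ s) (h1 : s < 1) (ht : t = ↑i + s)
    (ha : (1-s)*x1 + s*x2 = a) (hb : (1-s)*y1 + s*y2 = b) :
    chainParam V t = pt a b := by
  subst ht ha hb
  unfold chainParam
  rw [floor_nat_add i s h0 h1, hv1, hv2, show (↑i : ℝ) + s - ↑i = s by ring, smul_add_pt]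

lemma param_cases {t a b : ℝ} (h0 : 0 ≤ t) (h8 : t < 8) (h : chainParam V t = pt a b) :
    (0 ≤ t ∧ t < 1 ∧ a = 4 - 5*t ∧ b = 0) ∨
    (1 ≤ t ∧ t < 2 ∧ a = -1 + (14/3)*(t-1) ∧ b = (7/3)*(t-1)) ∨
    (2 ≤ t ∧ t < 3 ∧ a = 11/3 - (19/6)*(t-2) ∧ b = 7/3 + (19/6)*(t-2)) ∨
    (3 ≤ t ∧ t < 4 ∧ a = 1/2 + (7/2)*(t-3) ∧ b = 11/2 - (21/2)*(t-3)) ∨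
    (4 ≤ t ∧ t < 5 ∧ a = 4 ∧ b = -5 + 10*(t-4)) ∨
    (5 ≤ t ∧ t < 6 ∧ a = 4 - 4*(t-5) ∧ b = 5 - 4*(t-5)) ∨
    (6 ≤ t ∧ t < 7 ∧ a = 0 ∧ b = 1 + 3*(t-6)) ∨
    (7 ≤ t ∧ t < 8 ∧ a = 4*(t-7) ∧ b = 4 - 4*(t-7)) := by
  have hn8 : ⌊t⌋₊ < 8 := by rw [Nat.floor_lt h0]; exact_mod_cast h8
  have hs0 : (⌊t⌋₊ : ℝ) ≤ t := Nat.floor_le h0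
  have hs1 : t < ⌊t⌋₊ + 1 := Nat.lt_floor_add_one t
  unfold chainParam at h
  set n := ⌊t⌋₊ with hn
  clear_value n
  interval_cases n
  · simp only [V, List.getD] at h
    norm_num at h hs0 hs1
    rw [smul_add_pt, pt_eq_iff] at h
    exact Or.inl ⟨by linarith, by linarith, by linarith [h.1], by linarith [h.2]⟩
  · simp only [V, List.getD] at h
    norm_num at h hs0 hs1
    rw [smul_add_pt, pt_eq_iff] at h
    exact Or.inr (Or.inl ⟨by linarith, by linarith, by linarith [h.1], by linarith [h.2]⟩)
  · simp only [V, List.getD] at h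
    norm_num at h hs0 hs1
    rw [smul_add_pt, pt_eq_iff] at h
    exact Or.inr (Or.inr (Or.inl ⟨by linarith, by linarith, by linarith [h.1], by linarith [h.2]⟩))
  · simp only [V, List.getD] at h
    norm_num at h hs0 hs1
    rw [smul_add_pt, pt_eq_iff] at h
    exact Or.inr (Or.inr (Or.inr (Or.inl ⟨by linarith, by linarith, by linarith [h.1], by linarith [h.2]⟩)))
  · simp only [V, List.getD] at h
    norm_num at h hs0 hs1
    rw [smul_add_pt, pt_eq_iff] at h
    exact Or.inr (Or.inr (Or.inr (Or.inr (Or.inl ⟨by linarith, by linarith, by linarith [h.1], by linarith [h.2]⟩))))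
  · simp only [V, List.getD] at h
    norm_num at h hs0 hs1
    rw [smul_add_pt, pt_eq_iff] at h
    exact Or.inr (Or.inr (Or.inr (Or.inr (Or.inr (Or.inl ⟨by linarith, by linarith, by linarith [h.1], by linarith [h.2]⟩)))))
  · simp only [V, List.getD] at h
    norm_num at h hs0 hs1
    rw [smul_add_pt, pt_eq_iff] at h
    exact Or.inr (Or.inr (Or.inr (Or.inr (Or.inr (Or.inr (Or.inl ⟨by linarith, by linarith, by linarith [h.1], by linarith [h.2]⟩))))))
  · simp only [V, List.getD] at h
    norm_num at h hs0 hs1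
    rw [smul_add_pt, pt_eq_iff] at h
    exact Or.inr (Or.inr (Or.inr (Or.inr (Or.inr (Or.inr (Or.inr (⟨by linarith, by linarith, by linarith [h.1], by linarith [h.2]⟩)))))))

lemma not_mem_seg {x y x1 y1 x2 y2 : ℝ}
    (h : ∀ c : ℝ, 0 ≤ c → c ≤ 1 → (1-c)*x1 + c*x2 = x → (1-c)*y1 + c*y2 = y → False) :
    pt x y ∉ segment ℝ (pt x1 y1) (pt x2 y2) := by
  rw [segment_eq_image]
  rintro ⟨c, ⟨hc0, hc1⟩, hc⟩
  change (1-c) • pt x1 y1 + c • pt x2 y2 = pt x y at hc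
  rw [smul_add_pt, pt_eq_iff] at hc
  exact h c hc0 hc1 hc.1 hc.2

lemma seg_ne₁ {p q r w : Pt} (h : p ∉ segment ℝ r w) :
    segment ℝ p q ≠ segment ℝ r w := fun he => h (he ▸ left_mem_segment ℝ p q)

lemma seg_ne₂ {p q r w : Pt} (h : q ∉ segment ℝ r w) :
    segment ℝ p q ≠ segment ℝ r w := fun he => h (he ▸ right_mem_segment ℝ p q)

lemma not_mem_span_pair {x y x1 y1 x2 y2 : ℝ}
    (h : ∀ r : ℝ, r*(x2-x1) + x1 = x → r*(y2-y1) + y1 = y → False) :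
    pt x y ∉ affineSpan ℝ {pt x1 y1, pt x2 y2} := by
  intro hm
  have h2 : (pt x y - pt x1 y1) +ᵥ (pt x1 y1) ∈ line[ℝ, pt x1 y1, pt x2 y2] := by
    simpa [vadd_eq_add, sub_add_cancel] using hm
  rw [vadd_left_mem_affineSpan_pair] at h2
  obtain ⟨r, hr⟩ := h2
  rw [vsub_eq_sub, sub_pt, smul_pt, sub_pt, pt_eq_iff] at hr
  exact h r (by linarith [hr.1]) (by linarith [hr.2])


set_option maxHeartbeats 2000000 in
lemma circuitV : IsCoveringCircuit 5 8 V := by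
    refine ⟨⟨⟨?_, ?_, ?_⟩, ?_⟩, rfl, ?_⟩
    · -- consecutive vertices distinct
      intro i hi
      interval_cases i <;> norm_num [hV0, hV1, hV2, hV3, hV4, hV5, hV6, hV7, hV8, pt_eq_iff]
    · -- edges pairwise distinct
      intro i hi j hj hij
      interval_cases i <;> interval_cases j <;>
        first
        | exact absurd rfl hij
        | (simp only [Nat.reduceAdd, hV0, hV1, hV2, hV3, hV4, hV5, hV6, hV7, hV8]
           first
           | (apply seg_ne₁; apply not_mem_seg; intro c hc0 hc1 e1 e2; linarith)
           | (apply seg_ne₂; apply not_mem_seg; intro c hc0 hc1 e1 e2; linarith))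
    · -- no two consecutive edges collinear
      intro i hi
      have hi6 : i ≤ 6 := by omega
      interval_cases i <;> simp only [Nat.reduceAdd, hV0, hV1, hV2, hV3, hV4, hV5, hV6, hV7, hV8] <;>
        (apply not_mem_span_pair; intro r e1 e2; linarith)
    · -- covering
      rintro p ⟨a, b, ha, hb, rfl⟩
      interval_cases a <;> interval_cases b
      · exact ⟨4/5, by norm_num, evalV' 0 (4/5) hV0 hV1 (by norm_num) (by norm_num) (by norm_num) (by norm_num) (by norm_num)⟩
      · exact ⟨6, by norm_num, evalV' 6 (0) hV6 hV7 (by norm_num) (by norm_num) (by norm_num) (by norm_num) (by norm_num)⟩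
      · exact ⟨19/3, by norm_num, evalV' 6 (1/3) hV6 hV7 (by norm_num) (by norm_num) (by norm_num) (by norm_num) (by norm_num)⟩
      · exact ⟨20/3, by norm_num, evalV' 6 (2/3) hV6 hV7 (by norm_num) (by norm_num) (by norm_num) (by norm_num) (by norm_num)⟩
      · exact ⟨7, by norm_num, evalV' 7 (0) hV7 hV8 (by norm_num) (by norm_num) (by norm_num) (by norm_num) (by norm_num)⟩
      · exact ⟨3/5, by norm_num, evalV' 0 (3/5) hV0 hV1 (by norm_num) (by norm_num) (by norm_num) (by norm_num) (by norm_num)⟩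
      · exact ⟨10/7, by norm_num, evalV' 1 (3/7) hV1 hV2 (by norm_num) (by norm_num) (by norm_num) (by norm_num) (by norm_num)⟩
      · exact ⟨23/4, by norm_num, evalV' 5 (3/4) hV5 hV6 (by norm_num) (by norm_num) (by norm_num) (by norm_num) (by norm_num)⟩
      · exact ⟨29/4, by norm_num, evalV' 7 (1/4) hV7 hV8 (by norm_num) (by norm_num) (by norm_num) (by norm_num) (by norm_num)⟩
      · exact ⟨22/7, by norm_num, evalV' 3 (1/7) hV3 hV4 (by norm_num) (by norm_num) (by norm_num) (by norm_num) (by norm_num)⟩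
      · exact ⟨2/5, by norm_num, evalV' 0 (2/5) hV0 hV1 (by norm_num) (by norm_num) (by norm_num) (by norm_num) (by norm_num)⟩
      · exact ⟨24/7, by norm_num, evalV' 3 (3/7) hV3 hV4 (by norm_num) (by norm_num) (by norm_num) (by norm_num) (by norm_num)⟩
      · exact ⟨15/2, by norm_num, evalV' 7 (1/2) hV7 hV8 (by norm_num) (by norm_num) (by norm_num) (by norm_num) (by norm_num)⟩
      · exact ⟨11/2, by norm_num, evalV' 5 (1/2) hV5 hV6 (by norm_num) (by norm_num) (by norm_num) (by norm_num) (by norm_num)⟩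
      · exact ⟨48/19, by norm_num, evalV' 2 (10/19) hV2 hV3 (by norm_num) (by norm_num) (by norm_num) (by norm_num) (by norm_num)⟩
      · exact ⟨1/5, by norm_num, evalV' 0 (1/5) hV0 hV1 (by norm_num) (by norm_num) (by norm_num) (by norm_num) (by norm_num)⟩
      · exact ⟨31/4, by norm_num, evalV' 7 (3/4) hV7 hV8 (by norm_num) (by norm_num) (by norm_num) (by norm_num) (by norm_num)⟩
      · exact ⟨13/7, by norm_num, evalV' 1 (6/7) hV1 hV2 (by norm_num) (by norm_num) (by norm_num) (by norm_num) (by norm_num)⟩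
      · exact ⟨42/19, by norm_num, evalV' 2 (4/19) hV2 hV3 (by norm_num) (by norm_num) (by norm_num) (by norm_num) (by norm_num)⟩
      · exact ⟨21/4, by norm_num, evalV' 5 (1/4) hV5 hV6 (by norm_num) (by norm_num) (by norm_num) (by norm_num) (by norm_num)⟩
      · exact ⟨0, by norm_num, evalV' 0 (0) hV0 hV1 (by norm_num) (by norm_num) (by norm_num) (by norm_num) (by norm_num)⟩
      · exact ⟨23/5, by norm_num, evalV' 4 (3/5) hV4 hV5 (by norm_num) (by norm_num) (by norm_num) (by norm_num) (by norm_num)⟩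
      · exact ⟨47/10, by norm_num, evalV' 4 (7/10) hV4 hV5 (by norm_num) (by norm_num) (by norm_num) (by norm_num) (by norm_num)⟩
      · exact ⟨24/5, by norm_num, evalV' 4 (4/5) hV4 hV5 (by norm_num) (by norm_num) (by norm_num) (by norm_num) (by norm_num)⟩
      · exact ⟨49/10, by norm_num, evalV' 4 (9/10) hV4 hV5 (by norm_num) (by norm_num) (by norm_num) (by norm_num) (by norm_num)⟩
    · -- last and first edges non-collinear
      have : V 1 ∉ affineSpan ℝ {V 7, V 8} := by
        rw [hV1, hV7, hV8]
        apply not_mem_span_pair; intro r e1 e2; linarith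
      exact this

set_option maxHeartbeats 4000000 in
lemma uniqueV : ∀ p ∈ grid 5, p ≠ pt 4 0 →
    ∃! t, t ∈ Set.Ico (0:ℝ) 8 ∧ chainParam V t = p := by
  rintro p ⟨a, b, ha, hb, rfl⟩ hne
  interval_cases a <;> interval_cases b
  · refine ⟨4/5, ⟨⟨by norm_num, evalV' 0 (4/5) hV0 hV1 (by norm_num) (by norm_num) (by norm_num) (by norm_num) (by norm_num)⟩, ?_⟩⟩
    rintro u ⟨⟨hu0, hu8⟩, hu⟩
    obtain h|h|h|h|h|h|h|h := param_cases hu0 hu8 hu <;>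
      obtain ⟨h1, h2, h3, h4⟩ := h <;> push_cast at h3 h4 <;> linarith
  · refine ⟨6, ⟨⟨by norm_num, evalV' 6 (0) hV6 hV7 (by norm_num) (by norm_num) (by norm_num) (by norm_num) (by norm_num)⟩, ?_⟩⟩
    rintro u ⟨⟨hu0, hu8⟩, hu⟩
    obtain h|h|h|h|h|h|h|h := param_cases hu0 hu8 hu <;>
      obtain ⟨h1, h2, h3, h4⟩ := h <;> push_cast at h3 h4 <;> linarith
  · refine ⟨19/3, ⟨⟨by norm_num, evalV' 6 (1/3) hV6 hV7 (by norm_num) (by norm_num) (by norm_num) (by norm_num) (by norm_num)⟩, ?_⟩⟩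
    rintro u ⟨⟨hu0, hu8⟩, hu⟩
    obtain h|h|h|h|h|h|h|h := param_cases hu0 hu8 hu <;>
      obtain ⟨h1, h2, h3, h4⟩ := h <;> push_cast at h3 h4 <;> linarith
  · refine ⟨20/3, ⟨⟨by norm_num, evalV' 6 (2/3) hV6 hV7 (by norm_num) (by norm_num) (by norm_num) (by norm_num) (by norm_num)⟩, ?_⟩⟩
    rintro u ⟨⟨hu0, hu8⟩, hu⟩
    obtain h|h|h|h|h|h|h|h := param_cases hu0 hu8 hu <;>
      obtain ⟨h1, h2, h3, h4⟩ := h <;> push_cast at h3 h4 <;> linarith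
  · refine ⟨7, ⟨⟨by norm_num, evalV' 7 (0) hV7 hV8 (by norm_num) (by norm_num) (by norm_num) (by norm_num) (by norm_num)⟩, ?_⟩⟩
    rintro u ⟨⟨hu0, hu8⟩, hu⟩
    obtain h|h|h|h|h|h|h|h := param_cases hu0 hu8 hu <;>
      obtain ⟨h1, h2, h3, h4⟩ := h <;> push_cast at h3 h4 <;> linarith
  · refine ⟨3/5, ⟨⟨by norm_num, evalV' 0 (3/5) hV0 hV1 (by norm_num) (by norm_num) (by norm_num) (by norm_num) (by norm_num)⟩, ?_⟩⟩
    rintro u ⟨⟨hu0, hu8⟩, hu⟩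
    obtain h|h|h|h|h|h|h|h := param_cases hu0 hu8 hu <;>
      obtain ⟨h1, h2, h3, h4⟩ := h <;> push_cast at h3 h4 <;> linarith
  · refine ⟨10/7, ⟨⟨by norm_num, evalV' 1 (3/7) hV1 hV2 (by norm_num) (by norm_num) (by norm_num) (by norm_num) (by norm_num)⟩, ?_⟩⟩
    rintro u ⟨⟨hu0, hu8⟩, hu⟩
    obtain h|h|h|h|h|h|h|h := param_cases hu0 hu8 hu <;>
      obtain ⟨h1, h2, h3, h4⟩ := h <;> push_cast at h3 h4 <;> linarith
  · refine ⟨23/4, ⟨⟨by norm_num, evalV' 5 (3/4) hV5 hV6 (by norm_num) (by norm_num) (by norm_num) (by norm_num) (by norm_num)⟩, ?_⟩⟩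
    rintro u ⟨⟨hu0, hu8⟩, hu⟩
    obtain h|h|h|h|h|h|h|h := param_cases hu0 hu8 hu <;>
      obtain ⟨h1, h2, h3, h4⟩ := h <;> push_cast at h3 h4 <;> linarith
  · refine ⟨29/4, ⟨⟨by norm_num, evalV' 7 (1/4) hV7 hV8 (by norm_num) (by norm_num) (by norm_num) (by norm_num) (by norm_num)⟩, ?_⟩⟩
    rintro u ⟨⟨hu0, hu8⟩, hu⟩
    obtain h|h|h|h|h|h|h|h := param_cases hu0 hu8 hu <;>
      obtain ⟨h1, h2, h3, h4⟩ := h <;> push_cast at h3 h4 <;> linarith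
  · refine ⟨22/7, ⟨⟨by norm_num, evalV' 3 (1/7) hV3 hV4 (by norm_num) (by norm_num) (by norm_num) (by norm_num) (by norm_num)⟩, ?_⟩⟩
    rintro u ⟨⟨hu0, hu8⟩, hu⟩
    obtain h|h|h|h|h|h|h|h := param_cases hu0 hu8 hu <;>
      obtain ⟨h1, h2, h3, h4⟩ := h <;> push_cast at h3 h4 <;> linarith
  · refine ⟨2/5, ⟨⟨by norm_num, evalV' 0 (2/5) hV0 hV1 (by norm_num) (by norm_num) (by norm_num) (by norm_num) (by norm_num)⟩, ?_⟩⟩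
    rintro u ⟨⟨hu0, hu8⟩, hu⟩
    obtain h|h|h|h|h|h|h|h := param_cases hu0 hu8 hu <;>
      obtain ⟨h1, h2, h3, h4⟩ := h <;> push_cast at h3 h4 <;> linarith
  · refine ⟨24/7, ⟨⟨by norm_num, evalV' 3 (3/7) hV3 hV4 (by norm_num) (by norm_num) (by norm_num) (by norm_num) (by norm_num)⟩, ?_⟩⟩
    rintro u ⟨⟨hu0, hu8⟩, hu⟩
    obtain h|h|h|h|h|h|h|h := param_cases hu0 hu8 hu <;>
      obtain ⟨h1, h2, h3, h4⟩ := h <;> push_cast at h3 h4 <;> linarith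
  · refine ⟨15/2, ⟨⟨by norm_num, evalV' 7 (1/2) hV7 hV8 (by norm_num) (by norm_num) (by norm_num) (by norm_num) (by norm_num)⟩, ?_⟩⟩
    rintro u ⟨⟨hu0, hu8⟩, hu⟩
    obtain h|h|h|h|h|h|h|h := param_cases hu0 hu8 hu <;>
      obtain ⟨h1, h2, h3, h4⟩ := h <;> push_cast at h3 h4 <;> linarith
  · refine ⟨11/2, ⟨⟨by norm_num, evalV' 5 (1/2) hV5 hV6 (by norm_num) (by norm_num) (by norm_num) (by norm_num) (by norm_num)⟩, ?_⟩⟩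
    rintro u ⟨⟨hu0, hu8⟩, hu⟩
    obtain h|h|h|h|h|h|h|h := param_cases hu0 hu8 hu <;>
      obtain ⟨h1, h2, h3, h4⟩ := h <;> push_cast at h3 h4 <;> linarith
  · refine ⟨48/19, ⟨⟨by norm_num, evalV' 2 (10/19) hV2 hV3 (by norm_num) (by norm_num) (by norm_num) (by norm_num) (by norm_num)⟩, ?_⟩⟩
    rintro u ⟨⟨hu0, hu8⟩, hu⟩
    obtain h|h|h|h|h|h|h|h := param_cases hu0 hu8 hu <;>
      obtain ⟨h1, h2, h3, h4⟩ := h <;> push_cast at h3 h4 <;> linarith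
  · refine ⟨1/5, ⟨⟨by norm_num, evalV' 0 (1/5) hV0 hV1 (by norm_num) (by norm_num) (by norm_num) (by norm_num) (by norm_num)⟩, ?_⟩⟩
    rintro u ⟨⟨hu0, hu8⟩, hu⟩
    obtain h|h|h|h|h|h|h|h := param_cases hu0 hu8 hu <;>
      obtain ⟨h1, h2, h3, h4⟩ := h <;> push_cast at h3 h4 <;> linarith
  · refine ⟨31/4, ⟨⟨by norm_num, evalV' 7 (3/4) hV7 hV8 (by norm_num) (by norm_num) (by norm_num) (by norm_num) (by norm_num)⟩, ?_⟩⟩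
    rintro u ⟨⟨hu0, hu8⟩, hu⟩
    obtain h|h|h|h|h|h|h|h := param_cases hu0 hu8 hu <;>
      obtain ⟨h1, h2, h3, h4⟩ := h <;> push_cast at h3 h4 <;> linarith
  · refine ⟨13/7, ⟨⟨by norm_num, evalV' 1 (6/7) hV1 hV2 (by norm_num) (by norm_num) (by norm_num) (by norm_num) (by norm_num)⟩, ?_⟩⟩
    rintro u ⟨⟨hu0, hu8⟩, hu⟩
    obtain h|h|h|h|h|h|h|h := param_cases hu0 hu8 hu <;>
      obtain ⟨h1, h2, h3, h4⟩ := h <;> push_cast at h3 h4 <;> linarith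
  · refine ⟨42/19, ⟨⟨by norm_num, evalV' 2 (4/19) hV2 hV3 (by norm_num) (by norm_num) (by norm_num) (by norm_num) (by norm_num)⟩, ?_⟩⟩
    rintro u ⟨⟨hu0, hu8⟩, hu⟩
    obtain h|h|h|h|h|h|h|h := param_cases hu0 hu8 hu <;>
      obtain ⟨h1, h2, h3, h4⟩ := h <;> push_cast at h3 h4 <;> linarith
  · refine ⟨21/4, ⟨⟨by norm_num, evalV' 5 (1/4) hV5 hV6 (by norm_num) (by norm_num) (by norm_num) (by norm_num) (by norm_num)⟩, ?_⟩⟩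
    rintro u ⟨⟨hu0, hu8⟩, hu⟩
    obtain h|h|h|h|h|h|h|h := param_cases hu0 hu8 hu <;>
      obtain ⟨h1, h2, h3, h4⟩ := h <;> push_cast at h3 h4 <;> linarith
  · exact absurd (pt_eq_iff.mpr (by norm_num)) hne
  · refine ⟨23/5, ⟨⟨by norm_num, evalV' 4 (3/5) hV4 hV5 (by norm_num) (by norm_num) (by norm_num) (by norm_num) (by norm_num)⟩, ?_⟩⟩
    rintro u ⟨⟨hu0, hu8⟩, hu⟩
    obtain h|h|h|h|h|h|h|h := param_cases hu0 hu8 hu <;>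
      obtain ⟨h1, h2, h3, h4⟩ := h <;> push_cast at h3 h4 <;> linarith
  · refine ⟨47/10, ⟨⟨by norm_num, evalV' 4 (7/10) hV4 hV5 (by norm_num) (by norm_num) (by norm_num) (by norm_num) (by norm_num)⟩, ?_⟩⟩
    rintro u ⟨⟨hu0, hu8⟩, hu⟩
    obtain h|h|h|h|h|h|h|h := param_cases hu0 hu8 hu <;>
      obtain ⟨h1, h2, h3, h4⟩ := h <;> push_cast at h3 h4 <;> linarith
  · refine ⟨24/5, ⟨⟨by norm_num, evalV' 4 (4/5) hV4 hV5 (by norm_num) (by norm_num) (by norm_num) (by norm_num) (by norm_num)⟩, ?_⟩⟩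
    rintro u ⟨⟨hu0, hu8⟩, hu⟩
    obtain h|h|h|h|h|h|h|h := param_cases hu0 hu8 hu <;>
      obtain ⟨h1, h2, h3, h4⟩ := h <;> push_cast at h3 h4 <;> linarith
  · refine ⟨49/10, ⟨⟨by norm_num, evalV' 4 (9/10) hV4 hV5 (by norm_num) (by norm_num) (by norm_num) (by norm_num) (by norm_num)⟩, ?_⟩⟩
    rintro u ⟨⟨hu0, hu8⟩, hu⟩
    obtain h|h|h|h|h|h|h|h := param_cases hu0 hu8 hu <;>
      obtain ⟨h1, h2, h3, h4⟩ := h <;> push_cast at h3 h4 <;> linarith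

set_option maxHeartbeats 1000000 in
lemma cardV :
    {t | t ∈ Set.Ico (0:ℝ) 8 ∧ chainParam V t = pt 4 0}.encard = 2 := by
  have hset : {t | t ∈ Set.Ico (0:ℝ) 8 ∧ chainParam V t = pt 4 0} = {0, 9/2} := by
    ext t
    simp only [Set.mem_setOf_eq, Set.mem_insert_iff, Set.mem_singleton_iff]
    constructor
    · rintro ⟨⟨ht0, ht8⟩, ht⟩
      obtain h|h|h|h|h|h|h|h := param_cases ht0 ht8 ht <;>
        obtain ⟨h1, h2, h3, h4⟩ := h
      · left; linarith
      · exfalso; linarith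
      · exfalso; linarith
      · exfalso; linarith
      · right; linarith
      · exfalso; linarith
      · exfalso; linarith
      · exfalso; linarith
    · rintro (rfl | rfl)
      · exact ⟨by norm_num, evalV' 0 0 hV0 hV1 le_rfl (by norm_num) (by norm_num)
          (by norm_num) (by norm_num)⟩
      · exact ⟨by norm_num, evalV' 4 (1/2) hV4 hV5 (by norm_num) (by norm_num)
          (by norm_num) (by norm_num) (by norm_num)⟩
  rw [hset]
  exact Set.encard_pair (by norm_num)

/-- The closed polygonal chain with vertices
`(4,0), (-1,0), (11/3,7/3), (1/2,11/2), (4,-5), (4,5), (0,1), (0,4), (4,0)` is a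
covering circuit for `G_5^2` with exactly `8` edges such that every point of
`G_5^2` other than `(4,0)` equals `γ t` for exactly one `t ∈ [0, 8)`, while
`(4,0)` equals `γ t` for exactly two values `t ∈ [0, 8)`. -/
theorem stmt5 :
    IsCoveringCircuit 5 8
      (fun i => [pt 4 0, pt (-1) 0, pt (11/3) (7/3), pt (1/2) (11/2), pt 4 (-5),
        pt 4 5, pt 0 1, pt 0 4, pt 4 0].getD i (pt 4 0)) ∧
    (∀ p ∈ grid 5, p ≠ pt 4 0 →
      ∃! t, t ∈ Set.Ico (0 : ℝ) 8 ∧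
        chainParam (fun i => [pt 4 0, pt (-1) 0, pt (11/3) (7/3), pt (1/2) (11/2),
          pt 4 (-5), pt 4 5, pt 0 1, pt 0 4, pt 4 0].getD i (pt 4 0)) t = p) ∧
    {t | t ∈ Set.Ico (0 : ℝ) 8 ∧
      chainParam (fun i => [pt 4 0, pt (-1) 0, pt (11/3) (7/3), pt (1/2) (11/2),
        pt 4 (-5), pt 4 5, pt 0 1, pt 0 4, pt 4 0].getD i (pt 4 0)) t = pt 4 0}.encard
      = 2 := by
  have hfun : (fun i => [pt 4 0, pt (-1) 0, pt (11/3) (7/3), pt (1/2) (11/2), pt 4 (-5),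
      pt 4 5, pt 0 1, pt 0 4, pt 4 0].getD i (pt 4 0)) = V := rfl
  rw [hfun]
  exact ⟨circuitV, uniqueV, cardV⟩
end
end

section
/- The polygonal chain with vertices (2,3), (4,3), (1,0), (1,3), (4,0), (0,0), (0,4), (4,4), (4,1) is a covering trail for the grid G_5^2 with exactly 8 edges whose total length equals 20 + 6·√2. -/
noncomputable section

/-! ### Auxiliary lemmas -/

lemma ptA (x y : ℝ) : pt x y 0 = x := rfl
lemma ptB (x y : ℝ) : pt x y 1 = y := rfl

/-- The vertices of our chain. -/
def W : ℕ → Pt := fun i =>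
  [pt 2 3, pt 4 3, pt 1 0, pt 1 3, pt 4 0, pt 0 0, pt 0 4, pt 4 4,
    pt 4 1].getD i (pt 0 0)

lemma hW0 : W 0 = pt 2 3 := rfl
lemma hW1 : W 1 = pt 4 3 := rfl
lemma hW2 : W 2 = pt 1 0 := rfl
lemma hW3 : W 3 = pt 1 3 := rfl
lemma hW4 : W 4 = pt 4 0 := rfl
lemma hW5 : W 5 = pt 0 0 := rfl
lemma hW6 : W 6 = pt 0 4 := rfl
lemma hW7 : W 7 = pt 4 4 := rfl
lemma hW8 : W 8 = pt 4 1 := rfl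
lemma hW9 : W 9 = pt 0 0 := rfl

lemma seg_bound (a b p : Pt) (c0 c1 : ℝ) (h : p ∈ segment ℝ a b) :
    min (c0 * a 0 + c1 * a 1) (c0 * b 0 + c1 * b 1) ≤ c0 * p 0 + c1 * p 1 ∧
    c0 * p 0 + c1 * p 1 ≤ max (c0 * a 0 + c1 * a 1) (c0 * b 0 + c1 * b 1) := by
  obtain ⟨u, w, hu, hw, huw, rfl⟩ := h
  have h0 : (u • a + w • b) 0 = u * a 0 + w * b 0 := rfl
  have h1 : (u • a + w • b) 1 = u * a 1 + w * b 1 := rfl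
  rw [h0, h1]
  have hu' : u = 1 - w := by linarith
  subst hu'
  rcases le_total (c0 * a 0 + c1 * a 1) (c0 * b 0 + c1 * b 1) with hc | hc
  · rw [min_eq_left hc, max_eq_right hc]
    constructor <;>
      nlinarith [mul_nonneg hw (sub_nonneg.mpr hc), mul_nonneg hu (sub_nonneg.mpr hc)]
  · rw [min_eq_right hc, max_eq_left hc]
    constructor <;>
      nlinarith [mul_nonneg hw (sub_nonneg.mpr hc), mul_nonneg hu (sub_nonneg.mpr hc)]

lemma line_val (a b p : Pt) (c0 c1 : ℝ) (h : p ∈ affineSpan ℝ {a, b})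
    (hab : c0 * a 0 + c1 * a 1 = c0 * b 0 + c1 * b 1) :
    c0 * p 0 + c1 * p 1 = c0 * a 0 + c1 * a 1 := by
  have h' : (p - a) +ᵥ a ∈ affineSpan ℝ {a, b} := by simpa using h
  obtain ⟨r, hr⟩ := vadd_left_mem_affineSpan_pair.mp h'
  have e0 : r * (b 0 - a 0) = p 0 - a 0 := by simpa using congrArg (fun v : Pt => v 0) hr
  have e1 : r * (b 1 - a 1) = p 1 - a 1 := by simpa using congrArg (fun v : Pt => v 1) hr
  linear_combination (-c0)*e0 + (-c1)*e1 + (-r)*hab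

lemma chainParam_eq (v : ℕ → Pt) (i : ℕ) (s : ℝ) (h0 : 0 ≤ s) (h1 : s < 1) :
    chainParam v ((i:ℝ) + s) = (1 - s) • v i + s • v (i + 1) := by
  have hf : ⌊(i:ℝ) + s⌋₊ = i := by
    rw [Nat.floor_eq_iff (by positivity)]
    constructor <;> linarith
  unfold chainParam
  rw [hf]
  ring_nf

lemma pt_comb (u s x1 y1 x2 y2 : ℝ) :
    u • pt x1 y1 + s • pt x2 y2 = pt (u*x1+s*x2) (u*y1+s*y2) := by
  ext j; fin_cases j <;> rfl

lemma dist_pt (x1 y1 x2 y2 : ℝ) :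
    dist (pt x1 y1) (pt x2 y2) = Real.sqrt ((x1-x2)^2 + (y1-y2)^2) := by
  rw [EuclideanSpace.dist_eq]
  congr 1
  simp [Fin.sum_univ_two, pt, Real.dist_eq, sq_abs]

lemma pt_eq_pt {x y x' y' : ℝ} (hx : x = x') (hy : y = y') : pt x y = pt x' y' := by
  rw [hx, hy]

/-- The polygonal chain with vertices
`(2,3), (4,3), (1,0), (1,3), (4,0), (0,0), (0,4), (4,4), (4,1)` is a covering
trail for `G_5^2` with exactly `8` edges whose total length equals `20 + 6 √2`. -/
theorem stmt12 :
    IsCoveringTrail 5 8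
      (fun i => [pt 2 3, pt 4 3, pt 1 0, pt 1 3, pt 4 0, pt 0 0, pt 0 4, pt 4 4,
        pt 4 1].getD i (pt 0 0)) ∧
    chainLength 8
      (fun i => [pt 2 3, pt 4 3, pt 1 0, pt 1 3, pt 4 0, pt 0 0, pt 0 4, pt 4 4,
        pt 4 1].getD i (pt 0 0)) = 20 + 6 * Real.sqrt 2 := by
  have main : IsCoveringTrail 5 8 W ∧ chainLength 8 W = 20 + 6 * Real.sqrt 2 := by
    refine ⟨⟨⟨?_, ?_, ?_⟩, ?_⟩, ?_⟩
    · -- consecutive vertices distinct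
      intro i hi
      interval_cases i
      · intro h
        have : (2:ℝ) = 4 := congrArg (fun v : Pt => v 0) h
        norm_num at this
      · intro h
        have : (4:ℝ) = 1 := congrArg (fun v : Pt => v 0) h
        norm_num at this
      · intro h
        have : (0:ℝ) = 3 := congrArg (fun v : Pt => v 1) h
        norm_num at this
      · intro h
        have : (1:ℝ) = 4 := congrArg (fun v : Pt => v 0) h
        norm_num at this
      · intro h
        have : (4:ℝ) = 0 := congrArg (fun v : Pt => v 0) h
        norm_num at this
      · intro h
        have : (0:ℝ) = 4 := congrArg (fun v : Pt => v 1) h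
        norm_num at this
      · intro h
        have : (0:ℝ) = 4 := congrArg (fun v : Pt => v 0) h
        norm_num at this
      · intro h
        have : (4:ℝ) = 1 := congrArg (fun v : Pt => v 1) h
        norm_num at this
    · -- edges pairwise distinct
      intro i hi j hj hij
      interval_cases i <;> interval_cases j
      · exact absurd rfl hij
      · intro heq
        have hm := heq ▸ (left_mem_segment ℝ _ _ : W 0 ∈ segment ℝ (W 0) (W 1))
        have hb := seg_bound (W 1) (W 2) _ 1 (-1) hm
        rw [hW1, hW2, hW0] at hb
        norm_num [ptA, ptB] at hb
      · intro heq
        have hm := heq ▸ (left_mem_segment ℝ _ _ : W 0 ∈ segment ℝ (W 0) (W 1))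
        have hb := seg_bound (W 2) (W 3) _ 1 0 hm
        rw [hW2, hW3, hW0] at hb
        norm_num [ptA, ptB] at hb
      · intro heq
        have hm := heq ▸ (left_mem_segment ℝ _ _ : W 0 ∈ segment ℝ (W 0) (W 1))
        have hb := seg_bound (W 3) (W 4) _ 1 1 hm
        rw [hW3, hW4, hW0] at hb
        norm_num [ptA, ptB] at hb
      · intro heq
        have hm := heq ▸ (left_mem_segment ℝ _ _ : W 0 ∈ segment ℝ (W 0) (W 1))
        have hb := seg_bound (W 4) (W 5) _ 0 1 hm
        rw [hW4, hW5, hW0] at hb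
        norm_num [ptA, ptB] at hb
      · intro heq
        have hm := heq ▸ (left_mem_segment ℝ _ _ : W 0 ∈ segment ℝ (W 0) (W 1))
        have hb := seg_bound (W 5) (W 6) _ 1 0 hm
        rw [hW5, hW6, hW0] at hb
        norm_num [ptA, ptB] at hb
      · intro heq
        have hm := heq ▸ (left_mem_segment ℝ _ _ : W 0 ∈ segment ℝ (W 0) (W 1))
        have hb := seg_bound (W 6) (W 7) _ 0 1 hm
        rw [hW6, hW7, hW0] at hb
        norm_num [ptA, ptB] at hb
      · intro heq
        have hm := heq ▸ (left_mem_segment ℝ _ _ : W 0 ∈ segment ℝ (W 0) (W 1))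
        have hb := seg_bound (W 7) (W 8) _ 1 0 hm
        rw [hW7, hW8, hW0] at hb
        norm_num [ptA, ptB] at hb
      · intro heq
        have hm := heq ▸ (right_mem_segment ℝ _ _ : W 2 ∈ segment ℝ (W 1) (W 2))
        have hb := seg_bound (W 0) (W 1) _ 1 0 hm
        rw [hW0, hW1, hW2] at hb
        norm_num [ptA, ptB] at hb
      · exact absurd rfl hij
      · intro heq
        have hm := heq ▸ (left_mem_segment ℝ _ _ : W 1 ∈ segment ℝ (W 1) (W 2))
        have hb := seg_bound (W 2) (W 3) _ 1 0 hm
        rw [hW2, hW3, hW1] at hb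
        norm_num [ptA, ptB] at hb
      · intro heq
        have hm := heq ▸ (left_mem_segment ℝ _ _ : W 1 ∈ segment ℝ (W 1) (W 2))
        have hb := seg_bound (W 3) (W 4) _ 1 1 hm
        rw [hW3, hW4, hW1] at hb
        norm_num [ptA, ptB] at hb
      · intro heq
        have hm := heq ▸ (left_mem_segment ℝ _ _ : W 1 ∈ segment ℝ (W 1) (W 2))
        have hb := seg_bound (W 4) (W 5) _ 0 1 hm
        rw [hW4, hW5, hW1] at hb
        norm_num [ptA, ptB] at hb
      · intro heq
        have hm := heq ▸ (left_mem_segment ℝ _ _ : W 1 ∈ segment ℝ (W 1) (W 2))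
        have hb := seg_bound (W 5) (W 6) _ 1 0 hm
        rw [hW5, hW6, hW1] at hb
        norm_num [ptA, ptB] at hb
      · intro heq
        have hm := heq ▸ (left_mem_segment ℝ _ _ : W 1 ∈ segment ℝ (W 1) (W 2))
        have hb := seg_bound (W 6) (W 7) _ 0 1 hm
        rw [hW6, hW7, hW1] at hb
        norm_num [ptA, ptB] at hb
      · intro heq
        have hm := heq ▸ (right_mem_segment ℝ _ _ : W 2 ∈ segment ℝ (W 1) (W 2))
        have hb := seg_bound (W 7) (W 8) _ 1 0 hm
        rw [hW7, hW8, hW2] at hb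
        norm_num [ptA, ptB] at hb
      · intro heq
        have hm := heq ▸ (left_mem_segment ℝ _ _ : W 2 ∈ segment ℝ (W 2) (W 3))
        have hb := seg_bound (W 0) (W 1) _ 1 0 hm
        rw [hW0, hW1, hW2] at hb
        norm_num [ptA, ptB] at hb
      · intro heq
        have hm := heq ▸ (right_mem_segment ℝ _ _ : W 3 ∈ segment ℝ (W 2) (W 3))
        have hb := seg_bound (W 1) (W 2) _ 1 (-1) hm
        rw [hW1, hW2, hW3] at hb
        norm_num [ptA, ptB] at hb
      · exact absurd rfl hij
      · intro heq
        have hm := heq ▸ (left_mem_segment ℝ _ _ : W 2 ∈ segment ℝ (W 2) (W 3))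
        have hb := seg_bound (W 3) (W 4) _ 1 1 hm
        rw [hW3, hW4, hW2] at hb
        norm_num [ptA, ptB] at hb
      · intro heq
        have hm := heq ▸ (right_mem_segment ℝ _ _ : W 3 ∈ segment ℝ (W 2) (W 3))
        have hb := seg_bound (W 4) (W 5) _ 0 1 hm
        rw [hW4, hW5, hW3] at hb
        norm_num [ptA, ptB] at hb
      · intro heq
        have hm := heq ▸ (left_mem_segment ℝ _ _ : W 2 ∈ segment ℝ (W 2) (W 3))
        have hb := seg_bound (W 5) (W 6) _ 1 0 hm
        rw [hW5, hW6, hW2] at hb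
        norm_num [ptA, ptB] at hb
      · intro heq
        have hm := heq ▸ (left_mem_segment ℝ _ _ : W 2 ∈ segment ℝ (W 2) (W 3))
        have hb := seg_bound (W 6) (W 7) _ 0 1 hm
        rw [hW6, hW7, hW2] at hb
        norm_num [ptA, ptB] at hb
      · intro heq
        have hm := heq ▸ (left_mem_segment ℝ _ _ : W 2 ∈ segment ℝ (W 2) (W 3))
        have hb := seg_bound (W 7) (W 8) _ 1 0 hm
        rw [hW7, hW8, hW2] at hb
        norm_num [ptA, ptB] at hb
      · intro heq
        have hm := heq ▸ (left_mem_segment ℝ _ _ : W 3 ∈ segment ℝ (W 3) (W 4))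
        have hb := seg_bound (W 0) (W 1) _ 1 0 hm
        rw [hW0, hW1, hW3] at hb
        norm_num [ptA, ptB] at hb
      · intro heq
        have hm := heq ▸ (left_mem_segment ℝ _ _ : W 3 ∈ segment ℝ (W 3) (W 4))
        have hb := seg_bound (W 1) (W 2) _ 1 (-1) hm
        rw [hW1, hW2, hW3] at hb
        norm_num [ptA, ptB] at hb
      · intro heq
        have hm := heq ▸ (right_mem_segment ℝ _ _ : W 4 ∈ segment ℝ (W 3) (W 4))
        have hb := seg_bound (W 2) (W 3) _ 1 0 hm
        rw [hW2, hW3, hW4] at hb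
        norm_num [ptA, ptB] at hb
      · exact absurd rfl hij
      · intro heq
        have hm := heq ▸ (left_mem_segment ℝ _ _ : W 3 ∈ segment ℝ (W 3) (W 4))
        have hb := seg_bound (W 4) (W 5) _ 0 1 hm
        rw [hW4, hW5, hW3] at hb
        norm_num [ptA, ptB] at hb
      · intro heq
        have hm := heq ▸ (left_mem_segment ℝ _ _ : W 3 ∈ segment ℝ (W 3) (W 4))
        have hb := seg_bound (W 5) (W 6) _ 1 0 hm
        rw [hW5, hW6, hW3] at hb
        norm_num [ptA, ptB] at hb
      · intro heq
        have hm := heq ▸ (left_mem_segment ℝ _ _ : W 3 ∈ segment ℝ (W 3) (W 4))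
        have hb := seg_bound (W 6) (W 7) _ 0 1 hm
        rw [hW6, hW7, hW3] at hb
        norm_num [ptA, ptB] at hb
      · intro heq
        have hm := heq ▸ (left_mem_segment ℝ _ _ : W 3 ∈ segment ℝ (W 3) (W 4))
        have hb := seg_bound (W 7) (W 8) _ 1 0 hm
        rw [hW7, hW8, hW3] at hb
        norm_num [ptA, ptB] at hb
      · intro heq
        have hm := heq ▸ (left_mem_segment ℝ _ _ : W 4 ∈ segment ℝ (W 4) (W 5))
        have hb := seg_bound (W 0) (W 1) _ 0 1 hm
        rw [hW0, hW1, hW4] at hb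
        norm_num [ptA, ptB] at hb
      · intro heq
        have hm := heq ▸ (left_mem_segment ℝ _ _ : W 4 ∈ segment ℝ (W 4) (W 5))
        have hb := seg_bound (W 1) (W 2) _ 1 (-1) hm
        rw [hW1, hW2, hW4] at hb
        norm_num [ptA, ptB] at hb
      · intro heq
        have hm := heq ▸ (left_mem_segment ℝ _ _ : W 4 ∈ segment ℝ (W 4) (W 5))
        have hb := seg_bound (W 2) (W 3) _ 1 0 hm
        rw [hW2, hW3, hW4] at hb
        norm_num [ptA, ptB] at hb
      · intro heq
        have hm := heq ▸ (right_mem_segment ℝ _ _ : W 5 ∈ segment ℝ (W 4) (W 5))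
        have hb := seg_bound (W 3) (W 4) _ 1 0 hm
        rw [hW3, hW4, hW5] at hb
        norm_num [ptA, ptB] at hb
      · exact absurd rfl hij
      · intro heq
        have hm := heq ▸ (left_mem_segment ℝ _ _ : W 4 ∈ segment ℝ (W 4) (W 5))
        have hb := seg_bound (W 5) (W 6) _ 1 0 hm
        rw [hW5, hW6, hW4] at hb
        norm_num [ptA, ptB] at hb
      · intro heq
        have hm := heq ▸ (left_mem_segment ℝ _ _ : W 4 ∈ segment ℝ (W 4) (W 5))
        have hb := seg_bound (W 6) (W 7) _ 0 1 hm
        rw [hW6, hW7, hW4] at hb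
        norm_num [ptA, ptB] at hb
      · intro heq
        have hm := heq ▸ (left_mem_segment ℝ _ _ : W 4 ∈ segment ℝ (W 4) (W 5))
        have hb := seg_bound (W 7) (W 8) _ 0 1 hm
        rw [hW7, hW8, hW4] at hb
        norm_num [ptA, ptB] at hb
      · intro heq
        have hm := heq ▸ (left_mem_segment ℝ _ _ : W 5 ∈ segment ℝ (W 5) (W 6))
        have hb := seg_bound (W 0) (W 1) _ 1 0 hm
        rw [hW0, hW1, hW5] at hb
        norm_num [ptA, ptB] at hb
      · intro heq
        have hm := heq ▸ (left_mem_segment ℝ _ _ : W 5 ∈ segment ℝ (W 5) (W 6))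
        have hb := seg_bound (W 1) (W 2) _ 1 0 hm
        rw [hW1, hW2, hW5] at hb
        norm_num [ptA, ptB] at hb
      · intro heq
        have hm := heq ▸ (left_mem_segment ℝ _ _ : W 5 ∈ segment ℝ (W 5) (W 6))
        have hb := seg_bound (W 2) (W 3) _ 1 0 hm
        rw [hW2, hW3, hW5] at hb
        norm_num [ptA, ptB] at hb
      · intro heq
        have hm := heq ▸ (left_mem_segment ℝ _ _ : W 5 ∈ segment ℝ (W 5) (W 6))
        have hb := seg_bound (W 3) (W 4) _ 1 0 hm
        rw [hW3, hW4, hW5] at hb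
        norm_num [ptA, ptB] at hb
      · intro heq
        have hm := heq ▸ (right_mem_segment ℝ _ _ : W 6 ∈ segment ℝ (W 5) (W 6))
        have hb := seg_bound (W 4) (W 5) _ 0 1 hm
        rw [hW4, hW5, hW6] at hb
        norm_num [ptA, ptB] at hb
      · exact absurd rfl hij
      · intro heq
        have hm := heq ▸ (left_mem_segment ℝ _ _ : W 5 ∈ segment ℝ (W 5) (W 6))
        have hb := seg_bound (W 6) (W 7) _ 0 1 hm
        rw [hW6, hW7, hW5] at hb
        norm_num [ptA, ptB] at hb
      · intro heq
        have hm := heq ▸ (left_mem_segment ℝ _ _ : W 5 ∈ segment ℝ (W 5) (W 6))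
        have hb := seg_bound (W 7) (W 8) _ 1 0 hm
        rw [hW7, hW8, hW5] at hb
        norm_num [ptA, ptB] at hb
      · intro heq
        have hm := heq ▸ (left_mem_segment ℝ _ _ : W 6 ∈ segment ℝ (W 6) (W 7))
        have hb := seg_bound (W 0) (W 1) _ 1 0 hm
        rw [hW0, hW1, hW6] at hb
        norm_num [ptA, ptB] at hb
      · intro heq
        have hm := heq ▸ (left_mem_segment ℝ _ _ : W 6 ∈ segment ℝ (W 6) (W 7))
        have hb := seg_bound (W 1) (W 2) _ 1 0 hm
        rw [hW1, hW2, hW6] at hb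
        norm_num [ptA, ptB] at hb
      · intro heq
        have hm := heq ▸ (left_mem_segment ℝ _ _ : W 6 ∈ segment ℝ (W 6) (W 7))
        have hb := seg_bound (W 2) (W 3) _ 1 0 hm
        rw [hW2, hW3, hW6] at hb
        norm_num [ptA, ptB] at hb
      · intro heq
        have hm := heq ▸ (left_mem_segment ℝ _ _ : W 6 ∈ segment ℝ (W 6) (W 7))
        have hb := seg_bound (W 3) (W 4) _ 1 0 hm
        rw [hW3, hW4, hW6] at hb
        norm_num [ptA, ptB] at hb
      · intro heq
        have hm := heq ▸ (left_mem_segment ℝ _ _ : W 6 ∈ segment ℝ (W 6) (W 7))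
        have hb := seg_bound (W 4) (W 5) _ 0 1 hm
        rw [hW4, hW5, hW6] at hb
        norm_num [ptA, ptB] at hb
      · intro heq
        have hm := heq ▸ (right_mem_segment ℝ _ _ : W 7 ∈ segment ℝ (W 6) (W 7))
        have hb := seg_bound (W 5) (W 6) _ 1 0 hm
        rw [hW5, hW6, hW7] at hb
        norm_num [ptA, ptB] at hb
      · exact absurd rfl hij
      · intro heq
        have hm := heq ▸ (left_mem_segment ℝ _ _ : W 6 ∈ segment ℝ (W 6) (W 7))
        have hb := seg_bound (W 7) (W 8) _ 1 0 hm
        rw [hW7, hW8, hW6] at hb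
        norm_num [ptA, ptB] at hb
      · intro heq
        have hm := heq ▸ (left_mem_segment ℝ _ _ : W 7 ∈ segment ℝ (W 7) (W 8))
        have hb := seg_bound (W 0) (W 1) _ 0 1 hm
        rw [hW0, hW1, hW7] at hb
        norm_num [ptA, ptB] at hb
      · intro heq
        have hm := heq ▸ (left_mem_segment ℝ _ _ : W 7 ∈ segment ℝ (W 7) (W 8))
        have hb := seg_bound (W 1) (W 2) _ 0 1 hm
        rw [hW1, hW2, hW7] at hb
        norm_num [ptA, ptB] at hb
      · intro heq
        have hm := heq ▸ (left_mem_segment ℝ _ _ : W 7 ∈ segment ℝ (W 7) (W 8))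
        have hb := seg_bound (W 2) (W 3) _ 1 0 hm
        rw [hW2, hW3, hW7] at hb
        norm_num [ptA, ptB] at hb
      · intro heq
        have hm := heq ▸ (left_mem_segment ℝ _ _ : W 7 ∈ segment ℝ (W 7) (W 8))
        have hb := seg_bound (W 3) (W 4) _ 0 1 hm
        rw [hW3, hW4, hW7] at hb
        norm_num [ptA, ptB] at hb
      · intro heq
        have hm := heq ▸ (left_mem_segment ℝ _ _ : W 7 ∈ segment ℝ (W 7) (W 8))
        have hb := seg_bound (W 4) (W 5) _ 0 1 hm
        rw [hW4, hW5, hW7] at hb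
        norm_num [ptA, ptB] at hb
      · intro heq
        have hm := heq ▸ (left_mem_segment ℝ _ _ : W 7 ∈ segment ℝ (W 7) (W 8))
        have hb := seg_bound (W 5) (W 6) _ 1 0 hm
        rw [hW5, hW6, hW7] at hb
        norm_num [ptA, ptB] at hb
      · intro heq
        have hm := heq ▸ (right_mem_segment ℝ _ _ : W 8 ∈ segment ℝ (W 7) (W 8))
        have hb := seg_bound (W 6) (W 7) _ 0 1 hm
        rw [hW6, hW7, hW8] at hb
        norm_num [ptA, ptB] at hb
      · exact absurd rfl hij
    · -- non-collinearity
      intro i hi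
      have hi' : i ≤ 6 := by omega
      interval_cases i
      · intro h
        have hv := line_val (W 0) (W 1) (W 2) 0 1 h (by rw [hW0, hW1]; norm_num [ptA, ptB])
        rw [hW0, hW2] at hv
        norm_num [ptA, ptB] at hv
      · intro h
        have hv := line_val (W 1) (W 2) (W 3) (-1) 1 h (by rw [hW1, hW2]; norm_num [ptA, ptB])
        rw [hW1, hW3] at hv
        norm_num [ptA, ptB] at hv
      · intro h
        have hv := line_val (W 2) (W 3) (W 4) 1 0 h (by rw [hW2, hW3]; norm_num [ptA, ptB])
        rw [hW2, hW4] at hv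
        norm_num [ptA, ptB] at hv
      · intro h
        have hv := line_val (W 3) (W 4) (W 5) 1 1 h (by rw [hW3, hW4]; norm_num [ptA, ptB])
        rw [hW3, hW5] at hv
        norm_num [ptA, ptB] at hv
      · intro h
        have hv := line_val (W 4) (W 5) (W 6) 0 1 h (by rw [hW4, hW5]; norm_num [ptA, ptB])
        rw [hW4, hW6] at hv
        norm_num [ptA, ptB] at hv
      · intro h
        have hv := line_val (W 5) (W 6) (W 7) 1 0 h (by rw [hW5, hW6]; norm_num [ptA, ptB])
        rw [hW5, hW7] at hv
        norm_num [ptA, ptB] at hv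
      · intro h
        have hv := line_val (W 6) (W 7) (W 8) 0 1 h (by rw [hW6, hW7]; norm_num [ptA, ptB])
        rw [hW6, hW8] at hv
        norm_num [ptA, ptB] at hv
    · -- covering
      rintro p ⟨a, b, ha, hb, rfl⟩
      interval_cases a <;> interval_cases b
      · refine ⟨(((5:ℕ)):ℝ) + (0 : ℝ), ⟨by norm_num, by norm_num⟩, ?_⟩
        rw [chainParam_eq W 5 (0 : ℝ) (by norm_num) (by norm_num), hW5, hW6, pt_comb]
        exact pt_eq_pt (by norm_num) (by norm_num)
      · refine ⟨(((5:ℕ)):ℝ) + (1/4 : ℝ), ⟨by norm_num, by norm_num⟩, ?_⟩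
        rw [chainParam_eq W 5 (1/4 : ℝ) (by norm_num) (by norm_num), hW5, hW6, pt_comb]
        exact pt_eq_pt (by norm_num) (by norm_num)
      · refine ⟨(((5:ℕ)):ℝ) + (1/2 : ℝ), ⟨by norm_num, by norm_num⟩, ?_⟩
        rw [chainParam_eq W 5 (1/2 : ℝ) (by norm_num) (by norm_num), hW5, hW6, pt_comb]
        exact pt_eq_pt (by norm_num) (by norm_num)
      · refine ⟨(((5:ℕ)):ℝ) + (3/4 : ℝ), ⟨by norm_num, by norm_num⟩, ?_⟩
        rw [chainParam_eq W 5 (3/4 : ℝ) (by norm_num) (by norm_num), hW5, hW6, pt_comb]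
        exact pt_eq_pt (by norm_num) (by norm_num)
      · refine ⟨(((6:ℕ)):ℝ) + (0 : ℝ), ⟨by norm_num, by norm_num⟩, ?_⟩
        rw [chainParam_eq W 6 (0 : ℝ) (by norm_num) (by norm_num), hW6, hW7, pt_comb]
        exact pt_eq_pt (by norm_num) (by norm_num)
      · refine ⟨(((2:ℕ)):ℝ) + (0 : ℝ), ⟨by norm_num, by norm_num⟩, ?_⟩
        rw [chainParam_eq W 2 (0 : ℝ) (by norm_num) (by norm_num), hW2, hW3, pt_comb]
        exact pt_eq_pt (by norm_num) (by norm_num)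
      · refine ⟨(((2:ℕ)):ℝ) + (1/3 : ℝ), ⟨by norm_num, by norm_num⟩, ?_⟩
        rw [chainParam_eq W 2 (1/3 : ℝ) (by norm_num) (by norm_num), hW2, hW3, pt_comb]
        exact pt_eq_pt (by norm_num) (by norm_num)
      · refine ⟨(((2:ℕ)):ℝ) + (2/3 : ℝ), ⟨by norm_num, by norm_num⟩, ?_⟩
        rw [chainParam_eq W 2 (2/3 : ℝ) (by norm_num) (by norm_num), hW2, hW3, pt_comb]
        exact pt_eq_pt (by norm_num) (by norm_num)
      · refine ⟨(((3:ℕ)):ℝ) + (0 : ℝ), ⟨by norm_num, by norm_num⟩, ?_⟩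
        rw [chainParam_eq W 3 (0 : ℝ) (by norm_num) (by norm_num), hW3, hW4, pt_comb]
        exact pt_eq_pt (by norm_num) (by norm_num)
      · refine ⟨(((6:ℕ)):ℝ) + (1/4 : ℝ), ⟨by norm_num, by norm_num⟩, ?_⟩
        rw [chainParam_eq W 6 (1/4 : ℝ) (by norm_num) (by norm_num), hW6, hW7, pt_comb]
        exact pt_eq_pt (by norm_num) (by norm_num)
      · refine ⟨(((4:ℕ)):ℝ) + (1/2 : ℝ), ⟨by norm_num, by norm_num⟩, ?_⟩
        rw [chainParam_eq W 4 (1/2 : ℝ) (by norm_num) (by norm_num), hW4, hW5, pt_comb]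
        exact pt_eq_pt (by norm_num) (by norm_num)
      · refine ⟨(((1:ℕ)):ℝ) + (2/3 : ℝ), ⟨by norm_num, by norm_num⟩, ?_⟩
        rw [chainParam_eq W 1 (2/3 : ℝ) (by norm_num) (by norm_num), hW1, hW2, pt_comb]
        exact pt_eq_pt (by norm_num) (by norm_num)
      · refine ⟨(((3:ℕ)):ℝ) + (1/3 : ℝ), ⟨by norm_num, by norm_num⟩, ?_⟩
        rw [chainParam_eq W 3 (1/3 : ℝ) (by norm_num) (by norm_num), hW3, hW4, pt_comb]
        exact pt_eq_pt (by norm_num) (by norm_num)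
      · refine ⟨(((0:ℕ)):ℝ) + (0 : ℝ), ⟨by norm_num, by norm_num⟩, ?_⟩
        rw [chainParam_eq W 0 (0 : ℝ) (by norm_num) (by norm_num), hW0, hW1, pt_comb]
        exact pt_eq_pt (by norm_num) (by norm_num)
      · refine ⟨(((6:ℕ)):ℝ) + (1/2 : ℝ), ⟨by norm_num, by norm_num⟩, ?_⟩
        rw [chainParam_eq W 6 (1/2 : ℝ) (by norm_num) (by norm_num), hW6, hW7, pt_comb]
        exact pt_eq_pt (by norm_num) (by norm_num)
      · refine ⟨(((4:ℕ)):ℝ) + (1/4 : ℝ), ⟨by norm_num, by norm_num⟩, ?_⟩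
        rw [chainParam_eq W 4 (1/4 : ℝ) (by norm_num) (by norm_num), hW4, hW5, pt_comb]
        exact pt_eq_pt (by norm_num) (by norm_num)
      · refine ⟨(((3:ℕ)):ℝ) + (2/3 : ℝ), ⟨by norm_num, by norm_num⟩, ?_⟩
        rw [chainParam_eq W 3 (2/3 : ℝ) (by norm_num) (by norm_num), hW3, hW4, pt_comb]
        exact pt_eq_pt (by norm_num) (by norm_num)
      · refine ⟨(((1:ℕ)):ℝ) + (1/3 : ℝ), ⟨by norm_num, by norm_num⟩, ?_⟩
        rw [chainParam_eq W 1 (1/3 : ℝ) (by norm_num) (by norm_num), hW1, hW2, pt_comb]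
        exact pt_eq_pt (by norm_num) (by norm_num)
      · refine ⟨(((0:ℕ)):ℝ) + (1/2 : ℝ), ⟨by norm_num, by norm_num⟩, ?_⟩
        rw [chainParam_eq W 0 (1/2 : ℝ) (by norm_num) (by norm_num), hW0, hW1, pt_comb]
        exact pt_eq_pt (by norm_num) (by norm_num)
      · refine ⟨(((6:ℕ)):ℝ) + (3/4 : ℝ), ⟨by norm_num, by norm_num⟩, ?_⟩
        rw [chainParam_eq W 6 (3/4 : ℝ) (by norm_num) (by norm_num), hW6, hW7, pt_comb]
        exact pt_eq_pt (by norm_num) (by norm_num)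
      · refine ⟨(((4:ℕ)):ℝ) + (0 : ℝ), ⟨by norm_num, by norm_num⟩, ?_⟩
        rw [chainParam_eq W 4 (0 : ℝ) (by norm_num) (by norm_num), hW4, hW5, pt_comb]
        exact pt_eq_pt (by norm_num) (by norm_num)
      · refine ⟨(((8:ℕ)):ℝ) + (0 : ℝ), ⟨by norm_num, by norm_num⟩, ?_⟩
        rw [chainParam_eq W 8 (0 : ℝ) (by norm_num) (by norm_num), hW8, hW9, pt_comb]
        exact pt_eq_pt (by norm_num) (by norm_num)
      · refine ⟨(((7:ℕ)):ℝ) + (2/3 : ℝ), ⟨by norm_num, by norm_num⟩, ?_⟩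
        rw [chainParam_eq W 7 (2/3 : ℝ) (by norm_num) (by norm_num), hW7, hW8, pt_comb]
        exact pt_eq_pt (by norm_num) (by norm_num)
      · refine ⟨(((1:ℕ)):ℝ) + (0 : ℝ), ⟨by norm_num, by norm_num⟩, ?_⟩
        rw [chainParam_eq W 1 (0 : ℝ) (by norm_num) (by norm_num), hW1, hW2, pt_comb]
        exact pt_eq_pt (by norm_num) (by norm_num)
      · refine ⟨(((7:ℕ)):ℝ) + (0 : ℝ), ⟨by norm_num, by norm_num⟩, ?_⟩
        rw [chainParam_eq W 7 (0 : ℝ) (by norm_num) (by norm_num), hW7, hW8, pt_comb]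
        exact pt_eq_pt (by norm_num) (by norm_num)
    · -- length
      have s4 : Real.sqrt 4 = 2 := by
        rw [show (4:ℝ) = 2^2 by norm_num, Real.sqrt_sq (by norm_num)]
      have s9 : Real.sqrt 9 = 3 := by
        rw [show (9:ℝ) = 3^2 by norm_num, Real.sqrt_sq (by norm_num)]
      have s16 : Real.sqrt 16 = 4 := by
        rw [show (16:ℝ) = 4^2 by norm_num, Real.sqrt_sq (by norm_num)]
      have s18 : Real.sqrt 18 = 3 * Real.sqrt 2 := by
        rw [show (18:ℝ) = 3^2 * 2 by norm_num, Real.sqrt_mul (by positivity),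
          Real.sqrt_sq (by norm_num)]
      unfold chainLength
      rw [Finset.sum_range_succ, Finset.sum_range_succ, Finset.sum_range_succ,
        Finset.sum_range_succ, Finset.sum_range_succ, Finset.sum_range_succ,
        Finset.sum_range_succ, Finset.sum_range_succ, Finset.sum_range_zero,
        hW0, hW1, hW2, hW3, hW4, hW5, hW6, hW7, hW8,
        dist_pt, dist_pt, dist_pt, dist_pt, dist_pt, dist_pt, dist_pt, dist_pt]
      norm_num [s4, s9, s16, s18]
      ring
  exact main
end
end

section
/- For every integer n ≥ 3, every covering trail for the grid G_n^2 with exactly 2·(n−1) edges has total length strictly greater than n² − 1. -/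
noncomputable section

namespace S14
open Finset


lemma pt_apply0 (x y : ℝ) : pt x y 0 = x := rfl
lemma pt_apply1 (x y : ℝ) : pt x y 1 = y := rfl

lemma pt_sub_apply0 (x y x' y' : ℝ) : (pt x y - pt x' y') 0 = x - x' := rfl
lemma pt_sub_apply1 (x y x' y' : ℝ) : (pt x y - pt x' y') 1 = y - y' := rfl

lemma dist_pt (x y x' y' : ℝ) :
    dist (pt x y) (pt x' y') = Real.sqrt ((x - x')^2 + (y - y')^2) := by
  rw [EuclideanSpace.dist_eq, Fin.sum_univ_two]
  simp [pt, Real.dist_eq, sq_abs]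

lemma pt_inj {x y x' y' : ℝ} (h : pt x y = pt x' y') : x = x' ∧ y = y' := by
  constructor
  · have := congrFun (congrArg WithLp.ofLp h) 0; simpa [pt] using this
  · have := congrFun (congrArg WithLp.ofLp h) 1; simpa [pt] using this

lemma dist_sq_pt (x y x' y' : ℝ) :
    dist (pt x y) (pt x' y') ^ 2 = (x - x')^2 + (y - y')^2 := by
  rw [dist_pt, Real.sq_sqrt] <;> positivity

/-- distinct integer grid points have distance ≥ 1 -/
lemma one_le_dist_pt {a b a' b' : ℕ} (h : (a, b) ≠ (a', b')) :
    1 ≤ dist (pt a b) (pt a' b') := by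
  have h1 : (1:ℝ) ≤ ((a:ℝ) - a')^2 + ((b:ℝ) - b')^2 := by
    have hcases : a ≠ a' ∨ b ≠ b' := by
      by_contra hc; push_neg at hc; exact h (by simp [hc.1, hc.2])
    have sq0 : (0:ℝ) ≤ ((a:ℝ) - a')^2 := sq_nonneg _
    have sq0' : (0:ℝ) ≤ ((b:ℝ) - b')^2 := sq_nonneg _
    rcases hcases with hc | hc
    · have : (1:ℝ) ≤ ((a:ℝ) - a')^2 := by
        have : ((a:ℤ) - a') ≠ 0 := by
          intro hz; apply hc; omega
        have h1 : (1:ℤ) ≤ ((a:ℤ) - a')^2 := by nlinarith [sq_nonneg ((a:ℤ) - a'), Int.one_le_abs this, sq_abs ((a:ℤ)-a')]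
        calc (1:ℝ) = ((1:ℤ):ℝ) := by norm_num
        _ ≤ (((a:ℤ) - a')^2 : ℤ) := by exact_mod_cast h1
        _ = ((a:ℝ) - a')^2 := by push_cast; ring
      linarith
    · have : (1:ℝ) ≤ ((b:ℝ) - b')^2 := by
        have : ((b:ℤ) - b') ≠ 0 := by
          intro hz; apply hc; omega
        have h1 : (1:ℤ) ≤ ((b:ℤ) - b')^2 := by nlinarith [Int.one_le_abs this, sq_abs ((b:ℤ)-b')]
        calc (1:ℝ) = ((1:ℤ):ℝ) := by norm_num
        _ ≤ (((b:ℤ) - b')^2 : ℤ) := by exact_mod_cast h1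
        _ = ((b:ℝ) - b')^2 := by push_cast; ring
      linarith
  rw [dist_pt]
  calc (1:ℝ) = Real.sqrt 1 := (Real.sqrt_one).symm
  _ ≤ _ := Real.sqrt_le_sqrt h1




variable (v : ℕ → Pt)

/-- arc length from 0 to t -/
def F (t : ℝ) : ℝ :=
  (∑ i ∈ Finset.range ⌊t⌋₊, dist (v i) (v (i+1))) + (t - (⌊t⌋₊:ℝ)) * dist (v ⌊t⌋₊) (v (⌊t⌋₊ + 1))

lemma gamma_edge (i : ℕ) (t : ℝ) (h1 : (i:ℝ) ≤ t) (h2 : t ≤ (i:ℝ) + 1) :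
    chainParam v t = v i + (t - i) • (v (i+1) - v i) := by
  rcases eq_or_lt_of_le h2 with he | hlt
  · have : t = ((i+1 : ℕ) : ℝ) := by push_cast; linarith
    subst this
    rw [chainParam, Nat.floor_natCast]
    push_cast
    rw [sub_self]
    simp [smul_sub]
  · have hfl : ⌊t⌋₊ = i := by
      rw [Nat.floor_eq_iff (le_trans (Nat.cast_nonneg i) h1)]
      constructor <;> [exact_mod_cast h1; exact_mod_cast hlt]
    rw [chainParam, hfl, smul_sub, sub_smul, one_smul]
    abel

lemma F_edge (i : ℕ) (t : ℝ) (h1 : (i:ℝ) ≤ t) (h2 : t ≤ (i:ℝ) + 1) :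
    F v t = (∑ i' ∈ Finset.range i, dist (v i') (v (i'+1))) + (t - i) * dist (v i) (v (i+1)) := by
  rcases eq_or_lt_of_le h2 with he | hlt
  · have ht : t = ((i+1 : ℕ) : ℝ) := by push_cast; linarith
    subst ht
    rw [F, Nat.floor_natCast, Finset.sum_range_succ]
    push_cast
    ring
  · have hfl : ⌊t⌋₊ = i := by
      rw [Nat.floor_eq_iff (le_trans (Nat.cast_nonneg i) h1)]
      constructor <;> [exact_mod_cast h1; exact_mod_cast hlt]
    rw [F, hfl]

lemma F_sub_edge (i : ℕ) (a b : ℝ) (ha : (i:ℝ) ≤ a) (hb : b ≤ (i:ℝ) + 1) (hab : a ≤ b) :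
    F v b - F v a = (b - a) * dist (v i) (v (i+1)) := by
  rw [F_edge v i a ha (le_trans hab hb), F_edge v i b (le_trans ha hab) hb]
  ring

lemma dist_gamma_edge (i : ℕ) (a b : ℝ) (ha : (i:ℝ) ≤ a) (hb : b ≤ (i:ℝ) + 1) (hab : a ≤ b) :
    dist (chainParam v a) (chainParam v b) = (b - a) * dist (v i) (v (i+1)) := by
  rw [gamma_edge v i a ha (le_trans hab hb), gamma_edge v i b (le_trans ha hab) hb]
  rw [dist_eq_norm]
  have : v i + (a - ↑i) • (v (i + 1) - v i) - (v i + (b - ↑i) • (v (i + 1) - v i))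
      = (a - b) • (v (i+1) - v i) := by
    module
  rw [this, norm_smul, dist_eq_norm']
  simp only [Real.norm_eq_abs]
  rw [abs_of_nonpos (by linarith)]
  rw [show v (i+1) - v i = -(v i - v (i+1)) by abel, norm_neg]
  ring

lemma sub_gamma_edge (i : ℕ) (a b : ℝ) (ha : (i:ℝ) ≤ a) (hb : b ≤ (i:ℝ) + 1) (hab : a ≤ b) :
    chainParam v b - chainParam v a = (b - a) • (v (i+1) - v i) := by
  rw [gamma_edge v i a ha (le_trans hab hb), gamma_edge v i b (le_trans ha hab) hb]
  module

lemma chord_aux : ∀ (d : ℕ) (a b : ℝ), 0 ≤ a → a ≤ b → ⌊b⌋₊ - ⌊a⌋₊ ≤ d →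
    dist (chainParam v a) (chainParam v b) ≤ F v b - F v a := by
  intro d
  induction d with
  | zero =>
    intro a b ha hab hd
    have h1 : ⌊b⌋₊ ≤ ⌊a⌋₊ := by omega
    have h2 : b < (⌊a⌋₊ : ℝ) + 1 := by
      calc b < (⌊b⌋₊ : ℝ) + 1 := Nat.lt_floor_add_one b
      _ ≤ (⌊a⌋₊:ℝ) + 1 := by exact_mod_cast Nat.succ_le_succ h1
    have hfa : (⌊a⌋₊ : ℝ) ≤ a := Nat.floor_le ha
    rw [dist_gamma_edge v ⌊a⌋₊ a b hfa h2.le hab,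
        F_sub_edge v ⌊a⌋₊ a b hfa h2.le hab]
  | succ d ih =>
    intro a b ha hab hd
    by_cases hb : b ≤ (⌊a⌋₊:ℝ) + 1
    · have hfa : (⌊a⌋₊ : ℝ) ≤ a := Nat.floor_le ha
      rw [dist_gamma_edge v ⌊a⌋₊ a b hfa hb hab, F_sub_edge v ⌊a⌋₊ a b hfa hb hab]
    · push_neg at hb
      set c : ℝ := (⌊a⌋₊:ℝ) + 1 with hc
      have hfa : (⌊a⌋₊ : ℝ) ≤ a := Nat.floor_le ha
      have hac : a ≤ c := by
        have := Nat.lt_floor_add_one a; linarith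
      have hfc : ⌊c⌋₊ = ⌊a⌋₊ + 1 := by
        rw [hc]; exact_mod_cast Nat.floor_natCast (⌊a⌋₊ + 1)
      have hfb : ⌊a⌋₊ + 1 ≤ ⌊b⌋₊ := by
        have : (⌊a⌋₊ + 1 : ℕ) = ⌊c⌋₊ := hfc.symm
        rw [this]
        exact Nat.floor_le_floor hb.le
      have step1 : dist (chainParam v a) (chainParam v c) ≤ F v c - F v a := by
        rw [dist_gamma_edge v ⌊a⌋₊ a c hfa (le_refl _) hac,
            F_sub_edge v ⌊a⌋₊ a c hfa (le_refl _) hac]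
      have step2 : dist (chainParam v c) (chainParam v b) ≤ F v b - F v c := by
        apply ih c b (by positivity) hb.le
        omega
      calc dist (chainParam v a) (chainParam v b)
          ≤ dist (chainParam v a) (chainParam v c) + dist (chainParam v c) (chainParam v b) :=
            dist_triangle _ _ _
        _ ≤ (F v c - F v a) + (F v b - F v c) := add_le_add step1 step2
        _ = F v b - F v a := by ring

lemma chord (a b : ℝ) (ha : 0 ≤ a) (hab : a ≤ b) :
    dist (chainParam v a) (chainParam v b) ≤ F v b - F v a :=
  chord_aux v (⌊b⌋₊ - ⌊a⌋₊) a b ha hab le_rfl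

lemma F_mono (a b : ℝ) (ha : 0 ≤ a) (hab : a ≤ b) : F v a ≤ F v b := by
  have := chord v a b ha hab
  have := dist_nonneg (x := chainParam v a) (y := chainParam v b)
  linarith

lemma F_zero : F v 0 = 0 := by
  simp [F]

lemma F_nat (k : ℕ) : F v (k : ℝ) = chainLength k v := by
  rw [F, Nat.floor_natCast, sub_self, zero_mul, add_zero, chainLength]

/-- counting starts of blocks in a two-valued sequence: the counts of the two kinds
of block-starts differ by at most one. -/
lemma alt_count (g : ℕ → Prop) [DecidablePred g] (m : ℕ) (hm : 1 ≤ m) :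
    (g (m-1) →
      (((range m).filter (fun j => g j ∧ (j = 0 ∨ ¬ g (j-1)))).card ≤
       ((range m).filter (fun j => ¬ g j ∧ (j = 0 ∨ g (j-1)))).card + 1 ∧
       ((range m).filter (fun j => ¬ g j ∧ (j = 0 ∨ g (j-1)))).card ≤
       ((range m).filter (fun j => g j ∧ (j = 0 ∨ ¬ g (j-1)))).card)) ∧
    (¬ g (m-1) →
      (((range m).filter (fun j => ¬ g j ∧ (j = 0 ∨ g (j-1)))).card ≤
       ((range m).filter (fun j => g j ∧ (j = 0 ∨ ¬ g (j-1)))).card + 1 ∧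
       ((range m).filter (fun j => g j ∧ (j = 0 ∨ ¬ g (j-1)))).card ≤
       ((range m).filter (fun j => ¬ g j ∧ (j = 0 ∨ g (j-1)))).card)) := by
  induction m, hm using Nat.le_induction with
  | base =>
    constructor
    · intro h0
      rw [show (1:ℕ) - 1 = 0 from rfl] at h0
      rw [range_one]
      rw [filter_singleton, filter_singleton]
      simp [h0]
    · intro h0
      rw [show (1:ℕ) - 1 = 0 from rfl] at h0
      rw [range_one, filter_singleton, filter_singleton]
      simp [h0]
  | succ m hm ih =>
    have hm0 : m ≠ 0 := by omega
    have hmm : m + 1 - 1 = m := by omega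
    have hnotmem : m ∉ range m := by simp
    have hH : ∀ (p : ℕ → Prop) [DecidablePred p],
        ((range (m+1)).filter p).card =
        ((range m).filter p).card + (if p m then 1 else 0) := by
      intro p _
      rw [range_add_one, filter_insert]
      split
      · rw [card_insert_of_notMem (fun hc => hnotmem (mem_of_mem_filter _ hc))]
      · simp
    rw [hmm]
    rw [hH, hH]
    by_cases hgm : g m <;> by_cases hgm' : g (m-1)
    · -- continue horizontal: no new start
      have e1 : ¬ (g m ∧ (m = 0 ∨ ¬ g (m-1))) := by tauto
      have e2 : ¬ (¬ g m ∧ (m = 0 ∨ g (m-1))) := by tauto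
      rw [if_neg e1, if_neg e2]
      refine ⟨fun _ => ?_, fun h => absurd hgm h⟩
      simpa using (ih.1 hgm')
    · -- new horizontal start
      have e1 : (g m ∧ (m = 0 ∨ ¬ g (m-1))) := by tauto
      have e2 : ¬ (¬ g m ∧ (m = 0 ∨ g (m-1))) := by tauto
      rw [if_pos e1, if_neg e2]
      refine ⟨fun _ => ?_, fun h => absurd hgm h⟩
      have := ih.2 hgm'
      omega
    · -- new vertical start
      have e1 : ¬ (g m ∧ (m = 0 ∨ ¬ g (m-1))) := by tauto
      have e2 : (¬ g m ∧ (m = 0 ∨ g (m-1))) := by tauto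
      rw [if_neg e1, if_pos e2]
      refine ⟨fun h => absurd h hgm, fun _ => ?_⟩
      have := ih.1 hgm'
      omega
    · -- continue vertical
      have e1 : ¬ (g m ∧ (m = 0 ∨ ¬ g (m-1))) := by tauto
      have e2 : ¬ (¬ g m ∧ (m = 0 ∨ g (m-1))) := by tauto
      rw [if_neg e1, if_neg e2]
      refine ⟨fun h => absurd h hgm, fun _ => ?_⟩
      simpa using (ih.2 hgm')

/-- the number of distinct "rows" met by steps satisfying `P` is at most the number
of `P`-block starts, provided consecutive `P`-steps stay in the same row. -/
lemma rows_le_starts (P : ℕ → Prop) [DecidablePred P] (row : ℕ → ℕ) (M : ℕ)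
    (hprev : ∀ j, 0 < j → j < M → P (j-1) → P j → row (j-1) = row j) :
    (((range M).filter P).image row).card ≤
    ((range M).filter (fun j => P j ∧ (j = 0 ∨ ¬ P (j-1)))).card := by
  classical
  apply Finset.card_le_card_of_injOn (fun r => sInf {j | j < M ∧ P j ∧ row j = r})
  · intro r hr
    simp only [mem_coe, mem_image, mem_filter, mem_range] at hr
    obtain ⟨j, ⟨hjM, hjP⟩, hjr⟩ := hr
    have hne : {j | j < M ∧ P j ∧ row j = r}.Nonempty := ⟨j, hjM, hjP, hjr⟩
    have hmem := Nat.sInf_mem hne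
    set j0 := sInf {j | j < M ∧ P j ∧ row j = r} with hj0
    obtain ⟨h1, h2, h3⟩ := hmem
    refine Finset.mem_coe.mpr (mem_filter.mpr ⟨mem_range.mpr h1, h2, ?_⟩)
    by_contra hc
    push_neg at hc
    obtain ⟨hne0, hPp⟩ := hc
    have hrow : row (j0 - 1) = row j0 := hprev j0 (by omega) h1 hPp h2
    have : j0 - 1 ∈ {j | j < M ∧ P j ∧ row j = r} := ⟨by omega, hPp, by rw [hrow, h3]⟩
    have := Nat.sInf_le this
    omega
  · intro r hr r' hr' heq
    simp only [coe_image, Set.mem_image, mem_coe] at hr hr'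
    obtain ⟨j, hj, hjr⟩ := hr
    obtain ⟨j', hj', hjr'⟩ := hr'
    rw [mem_filter, mem_range] at hj hj'
    have hne : {i | i < M ∧ P i ∧ row i = r}.Nonempty := ⟨j, hj.1, hj.2, hjr⟩
    have hne' : {i | i < M ∧ P i ∧ row i = r'}.Nonempty := ⟨j', hj'.1, hj'.2, hjr'⟩
    have h3 := (Nat.sInf_mem hne).2.2
    have h3' := (Nat.sInf_mem hne').2.2
    simp only at heq
    rw [← h3, ← h3', heq]


lemma comb (n : ℕ) (hn : 3 ≤ n) (c : ℕ → ℕ × ℕ)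
    (hrange : ∀ j < n^2, (c j).1 < n ∧ (c j).2 < n)
    (hsurj : ∀ a < n, ∀ b < n, ∃ j < n^2, c j = (a, b))
    (hstep : ∀ j, j + 1 < n^2 →
      (((c (j+1)).1 : ℤ) - (c j).1)^2 + (((c (j+1)).2 : ℤ) - (c j).2)^2 = 1) :
    2*n - 2 ≤ ((Finset.Ico 1 (n^2 - 1)).filter
      (fun j => ¬(((c (j+1)).1 : ℤ) - (c j).1 = ((c j).1 : ℤ) - ((c (j-1)).1) ∧
                 ((c (j+1)).2 : ℤ) - (c j).2 = ((c j).2 : ℤ) - ((c (j-1)).2)))).card := by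
  classical
  have hN9 : 9 ≤ n^2 := by nlinarith
  set N := n^2 with hN
  set M := N - 1 with hM
  have hM8 : 8 ≤ M := by omega
  set P : ℕ → Prop := fun j => (c (j+1)).2 = (c j).2 with hP
  have dichot : ∀ j, j + 1 < N → (P j ∧ ¬ (c (j+1)).1 = (c j).1) ∨
      ((c (j+1)).1 = (c j).1 ∧ ¬ P j) := by
    intro j hj
    have h := hstep j hj
    by_cases hdx : ((c (j+1)).1 : ℤ) - (c j).1 = 0
    · right
      refine ⟨by omega, fun hPj => ?_⟩
      have hdy : ((c (j+1)).2 : ℤ) - (c j).2 = 0 := by simp only [hP] at hPj; omega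
      rw [hdx, hdy] at h; norm_num at h
    · left
      have hdy : ((c (j+1)).2 : ℤ) - (c j).2 = 0 := by
        by_contra hdy
        have h1 : 1 ≤ |((c (j+1)).1 : ℤ) - (c j).1| := Int.one_le_abs hdx
        have h2 : 1 ≤ |((c (j+1)).2 : ℤ) - (c j).2| := Int.one_le_abs hdy
        nlinarith [sq_abs (((c (j+1)).1 : ℤ) - (c j).1), sq_abs (((c (j+1)).2 : ℤ) - (c j).2),
          abs_nonneg (((c (j+1)).1 : ℤ) - (c j).1), abs_nonneg (((c (j+1)).2 : ℤ) - (c j).2)]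
      exact ⟨by simp only [hP]; omega, fun hq => hdx (by omega)⟩
  set SH := (range M).filter (fun j => P j ∧ (j = 0 ∨ ¬ P (j-1))) with hSH
  set SV := (range M).filter (fun j => ¬ P j ∧ (j = 0 ∨ P (j-1))) with hSV
  have halt : SH.card ≤ SV.card + 1 ∧ SV.card ≤ SH.card + 1 := by
    have h := alt_count P M (by omega)
    by_cases hg : P (M-1)
    · have h2 := h.1 hg
      rw [← hSH, ← hSV] at h2
      exact ⟨h2.1, by omega⟩
    · have h2 := h.2 hg
      rw [← hSH, ← hSV] at h2
      exact ⟨by omega, h2.1⟩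
  set rowsH := ((range M).filter P).image (fun j => (c j).2) with hrowsH
  set colsV := ((range M).filter (fun j => ¬ P j)).image (fun j => (c j).1) with hcolsV
  have hrowsHle : rowsH.card ≤ SH.card := by
    rw [hrowsH, hSH]
    apply rows_le_starts
    intro j hj0 hjM hPp hPj
    have h1 : (j - 1) + 1 = j := by omega
    simp only [hP] at hPp
    rw [h1] at hPp
    exact hPp.symm
  have hcolsVle : colsV.card ≤ SV.card := by
    have heq : SV = (range M).filter (fun j => (¬ P j) ∧ (j = 0 ∨ ¬ ¬ P (j-1))) := by
      rw [hSV]; apply filter_congr; intro j _; simp only [not_not]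
    rw [hcolsV, heq]
    apply rows_le_starts (fun j => ¬ P j)
    intro j hj0 hjM hPp hPj
    have h1 : (j - 1) + 1 = j := by omega
    rcases dichot (j-1) (by omega) with ⟨hp, _⟩ | ⟨hq, _⟩
    · exact absurd hp hPp
    · rw [h1] at hq; exact hq.symm
  set T0 := (Ico 1 M).filter (fun j => ¬ (P j ↔ P (j-1))) with hT0
  have hdisj : Disjoint SH SV := by
    rw [disjoint_left]
    intro a ha hb
    rw [hSH, mem_filter] at ha; rw [hSV, mem_filter] at hb
    exact hb.2.1 ha.2.1
  have hunion : SH ∪ SV = insert 0 T0 := by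
    ext j
    simp only [hSH, hSV, hT0, mem_union, mem_filter, mem_range, mem_insert, mem_Ico]
    constructor
    · intro h
      by_cases hj0 : j = 0
      · exact Or.inl hj0
      right
      rcases h with ⟨hj, hP1, h2⟩ | ⟨hj, hP1, h2⟩
      · exact ⟨⟨by omega, hj⟩, fun hiff => (h2.resolve_left hj0) (hiff.mp hP1)⟩
      · exact ⟨⟨by omega, hj⟩, fun hiff => hP1 (hiff.mpr (h2.resolve_left hj0))⟩
    · intro h
      rcases h with rfl | ⟨⟨hj1, hjM⟩, hne⟩
      · by_cases hP0 : P 0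
        · exact Or.inl ⟨by omega, hP0, Or.inl rfl⟩
        · exact Or.inr ⟨by omega, hP0, Or.inl rfl⟩
      · by_cases hPj : P j
        · exact Or.inl ⟨hjM, hPj, Or.inr (fun hp => hne ⟨fun _ => hp, fun _ => hPj⟩)⟩
        · refine Or.inr ⟨hjM, hPj, Or.inr ?_⟩
          by_contra hp
          exact hne ⟨fun h' => absurd h' hPj, fun h' => absurd h' hp⟩
  have h0T0 : 0 ∉ T0 := by
    rw [hT0]; intro h; have := (mem_filter.mp h).1; rw [mem_Ico] at this; omega
  have hsum : SH.card + SV.card = T0.card + 1 := by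
    rw [← card_union_of_disjoint hdisj, hunion, card_insert_of_notMem h0T0]
  have hT0le : T0.card ≤ ((Ico 1 M).filter
      (fun j => ¬(((c (j+1)).1 : ℤ) - (c j).1 = ((c j).1 : ℤ) - ((c (j-1)).1) ∧
                 ((c (j+1)).2 : ℤ) - (c j).2 = ((c j).2 : ℤ) - ((c (j-1)).2)))).card := by
    apply card_le_card
    intro j hj
    rw [hT0, mem_filter] at hj
    rw [mem_filter]
    refine ⟨hj.1, fun hc => hj.2 ?_⟩
    have hsy := hc.2
    have h1 : (j - 1) + 1 = j := by
      have := (mem_Ico.mp hj.1).1; omega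
    simp only [hP]
    rw [h1]
    constructor <;> intro h <;> omega
  -- main count : SH.card + SV.card ≥ 2n - 1
  have hfinal : 2*n - 1 ≤ SH.card + SV.card := by
    by_cases hHn : n ≤ SH.card
    · omega
    · -- SH.card ≤ n - 1 : there is a free row
      have hrows_sub : rowsH ⊆ range n := by
        rw [hrowsH]
        intro r hr
        rw [mem_image] at hr
        obtain ⟨j, hj, hjr⟩ := hr
        have hjM := (mem_range.mp (mem_filter.mp hj).1)
        rw [mem_range, ← hjr]
        exact (hrange j (by omega)).2
      have hfree : ∃ r < n, r ∉ rowsH := by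
        by_contra hcon
        push_neg at hcon
        have hsub : range n ⊆ rowsH := fun r hr => hcon r (mem_range.mp hr)
        have := card_le_card hsub
        rw [card_range] at this
        omega
      obtain ⟨r, hrn, hrfree⟩ := hfree
      have hcols : range n ⊆ colsV := by
        intro q hq
        rw [mem_range] at hq
        obtain ⟨j₀, hj₀N, hcj⟩ := hsurj q hq r hrn
        by_cases hj0M : j₀ < M
        · rcases dichot j₀ (by omega) with ⟨hPj, _⟩ | ⟨hQ, hnP⟩
          · exact absurd (by
              rw [hrowsH, mem_image]
              exact ⟨j₀, mem_filter.mpr ⟨mem_range.mpr hj0M, hPj⟩, by rw [hcj]⟩) hrfree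
          · rw [hcolsV, mem_image]
            exact ⟨j₀, mem_filter.mpr ⟨mem_range.mpr hj0M, hnP⟩, by rw [hcj]⟩
        · have hj₀ : j₀ = M := by omega
          have hstep' : (M - 1) + 1 = M := by omega
          have hcM : c M = (q, r) := by rw [← hj₀]; exact hcj
          rcases dichot (M-1) (by omega) with ⟨hPj, _⟩ | ⟨hQ, hnP⟩
          · refine absurd ?_ hrfree
            rw [hrowsH, mem_image]
            refine ⟨M-1, mem_filter.mpr ⟨mem_range.mpr (by omega), hPj⟩, ?_⟩
            simp only [hP] at hPj
            rw [hstep'] at hPj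
            show (c (M-1)).2 = r
            rw [← hPj, hcM]
          · rw [hcolsV, mem_image]
            refine ⟨M-1, mem_filter.mpr ⟨mem_range.mpr (by omega), hnP⟩, ?_⟩
            rw [hstep'] at hQ
            show (c (M-1)).1 = q
            rw [← hQ, hcM]
      have hcolsn : n ≤ colsV.card := by
        have := card_le_card hcols
        rwa [card_range] at this
      omega
  omega

end S14

set_option maxHeartbeats 2000000 in
open Finset S14 in
/-- For every integer `n ≥ 3`, every covering trail for `G_n^2` with exactly
`2 (n - 1)` edges has total length strictly greater than `n² - 1`. -/
theorem stmt14 (n : ℕ) (hn : 3 ≤ n) (v : ℕ → Pt)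
    (hv : IsCoveringTrail n (2 * (n - 1)) v) :
    (n : ℝ) ^ 2 - 1 < chainLength (2 * (n - 1)) v := by
  classical
  by_contra hcon
  push_neg at hcon
  set k := 2 * (n - 1) with hk
  have hk4 : 4 ≤ k := by omega
  set N := n ^ 2 with hN
  have hN9 : 9 ≤ N := by
    rw [hN]
    calc (9:ℕ) = 3*3 := rfl
    _ ≤ n*n := Nat.mul_le_mul hn hn
    _ = n^2 := (pow_two n).symm
  obtain ⟨⟨hne, _hdist, _hcol⟩, hcover⟩ := hv
  -- choose a time for each grid point
  have hchoice : ∀ q : ℕ × ℕ, q ∈ (range n ×ˢ range n) →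
      ∃ t, t ∈ Set.Icc (0:ℝ) (k:ℝ) ∧ chainParam v t = pt q.1 q.2 := by
    intro q hq
    rw [mem_product, mem_range, mem_range] at hq
    obtain ⟨t, ht, hgt⟩ := hcover (pt q.1 q.2) ⟨q.1, q.2, hq.1, hq.2, rfl⟩
    exact ⟨t, ht, hgt⟩
  set tmap : ℕ × ℕ → ℝ := fun q =>
    if hq : q ∈ (range n ×ˢ range n) then Classical.choose (hchoice q hq) else 0 with htmap
  have htspec : ∀ q ∈ (range n ×ˢ range n),
      tmap q ∈ Set.Icc (0:ℝ) (k:ℝ) ∧ chainParam v (tmap q) = pt q.1 q.2 := by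
    intro q hq
    rw [htmap]
    simp only [hq, dif_pos]
    exact Classical.choose_spec (hchoice q hq)
  have htinj : Set.InjOn tmap ↑(range n ×ˢ range n) := by
    intro q hq q' hq' heq
    rw [Finset.mem_coe] at hq hq'
    have h1 := (htspec q hq).2
    have h2 := (htspec q' hq').2
    rw [heq, h2] at h1
    obtain ⟨e1, e2⟩ := pt_inj h1
    have : q'.1 = q.1 := Nat.cast_injective e1
    have : q'.2 = q.2 := Nat.cast_injective e2
    exact Prod.ext (by omega) (by omega)
  set T : Finset ℝ := (range n ×ˢ range n).image tmap with hT
  have hTcard : T.card = N := by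
    rw [hT, card_image_of_injOn htinj, card_product, card_range, hN]; ring
  set e := T.orderIsoOfFin hTcard with he
  set u : ℕ → ℝ := fun j => if h : j < N then (e ⟨j, h⟩ : ℝ) else 0 with hu
  have hueq : ∀ j (h : j < N), u j = (e ⟨j, h⟩ : ℝ) := by
    intro j h; rw [hu]; simp only [h, dif_pos]
  have humono : ∀ {i j : ℕ}, i < j → j < N → u i < u j := by
    intro i j hij hjN
    rw [hueq i (by omega), hueq j hjN]
    have : (⟨i, by omega⟩ : Fin N) < ⟨j, hjN⟩ := by
      rw [Fin.mk_lt_mk]; exact hij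
    exact_mod_cast (e.lt_iff_lt).mpr this
  have humono' : ∀ {i j : ℕ}, i ≤ j → j < N → u i ≤ u j := by
    intro i j hij hjN
    rcases eq_or_lt_of_le hij with rfl | h
    · exact le_refl _
    · exact (humono h hjN).le
  have humem : ∀ j, j < N → u j ∈ T := by
    intro j h; rw [hueq j h]; exact coe_mem _
  have husurj : ∀ τ ∈ T, ∃ j, ∃ h : j < N, u j = τ := by
    intro τ hτ
    refine ⟨(e.symm ⟨τ, hτ⟩ : Fin N).1, (e.symm ⟨τ, hτ⟩ : Fin N).2, ?_⟩
    rw [hueq _ (e.symm ⟨τ, hτ⟩ : Fin N).2]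
    have : (⟨(e.symm ⟨τ, hτ⟩ : Fin N).1, (e.symm ⟨τ, hτ⟩ : Fin N).2⟩ : Fin N)
        = e.symm ⟨τ, hτ⟩ := by apply Fin.ext; rfl
    rw [this, OrderIso.apply_symm_apply]
  -- the sequence of grid points in time order
  have hcex : ∀ j, j < N → ∃ q, q ∈ (range n ×ˢ range n) ∧ tmap q = u j := by
    intro j h
    have := humem j h
    rw [hT, mem_image] at this
    obtain ⟨q, hq, hqe⟩ := this
    exact ⟨q, hq, hqe⟩
  set c : ℕ → ℕ × ℕ := fun j =>
    if h : j < N then Classical.choose (hcex j h) else 0 with hc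
  have hcspec : ∀ j, j < N → c j ∈ (range n ×ˢ range n) ∧ tmap (c j) = u j := by
    intro j h
    rw [hc]; simp only [h, dif_pos]
    exact Classical.choose_spec (hcex j h)
  have hPt : ∀ j, j < N → chainParam v (u j) = pt (c j).1 (c j).2 := by
    intro j h
    obtain ⟨h1, h2⟩ := hcspec j h
    rw [← h2]
    exact (htspec _ h1).2
  have hu0k : ∀ j, j < N → u j ∈ Set.Icc (0:ℝ) (k:ℝ) := by
    intro j h
    obtain ⟨h1, h2⟩ := hcspec j h
    rw [← h2]
    exact (htspec _ h1).1
  have hcinj : ∀ j, j < N → ∀ j', j' < N → c j = c j' → j = j' := by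
    intro j hj j' hj' hcc
    by_contra hne'
    have h1 := (hcspec j hj).2
    have h2 := (hcspec j' hj').2
    rw [hcc, h2] at h1
    rcases Nat.lt_or_ge j j' with h | h
    · exact absurd h1 (ne_of_gt (humono h hj'))
    · have : j' < j := by omega
      exact absurd h1 (ne_of_lt (humono this hj))
  have hcsurj : ∀ a, a < n → ∀ b, b < n → ∃ j, j < N ∧ c j = (a, b) := by
    intro a ha b hb
    have hqmem : ((a, b) : ℕ × ℕ) ∈ (range n ×ˢ range n) := by
      rw [mem_product, mem_range, mem_range]; exact ⟨ha, hb⟩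
    have : tmap (a, b) ∈ T := mem_image_of_mem tmap hqmem
    obtain ⟨j, hjN, hju⟩ := husurj _ this
    refine ⟨j, hjN, ?_⟩
    have h1 := (hcspec j hjN).2
    rw [hju] at h1
    exact htinj (Finset.mem_coe.mpr (hcspec j hjN).1) (Finset.mem_coe.mpr hqmem) h1
  have hcrange : ∀ j, j < N → (c j).1 < n ∧ (c j).2 < n := by
    intro j h
    have := (hcspec j h).1
    rw [mem_product, mem_range, mem_range] at this
    exact this
  -- distances between consecutive points
  set dseq : ℕ → ℝ :=
    fun j => dist (pt ((c j).1:ℝ) ((c j).2:ℝ)) (pt ((c (j+1)).1:ℝ) ((c (j+1)).2:ℝ)) with hdseq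
  have hone : ∀ j, j + 1 < N → 1 ≤ dseq j := by
    intro j hj
    apply one_le_dist_pt
    intro hcc
    rw [Prod.mk.injEq] at hcc
    have hcc' : c j = c (j+1) := Prod.ext hcc.1 hcc.2
    have := hcinj j (by omega) (j+1) hj hcc'
    omega
  have hchordj : ∀ j, j + 1 < N → dseq j ≤ F v (u (j+1)) - F v (u j) := by
    intro j hj
    rw [hdseq]
    simp only
    rw [← hPt j (by omega), ← hPt (j+1) hj]
    exact chord v (u j) (u (j+1)) (hu0k j (by omega)).1 (humono (by omega) hj).le
  have htel : ∑ j ∈ range (N-1), (F v (u (j+1)) - F v (u j)) = F v (u (N-1)) - F v (u 0) :=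
    Finset.sum_range_sub (fun j => F v (u j)) (N-1)
  have hFle : F v (u (N-1)) - F v (u 0) ≤ chainLength k v := by
    have h1 : F v (u (N-1)) ≤ F v (k:ℝ) :=
      F_mono v _ _ (hu0k (N-1) (by omega)).1 (hu0k (N-1) (by omega)).2
    have h2 : 0 ≤ F v (u 0) := by
      have h3 := F_mono v 0 (u 0) le_rfl (hu0k 0 (by omega)).1
      rw [F_zero] at h3
      linarith
    rw [F_nat] at h1
    linarith
  have hNcast : ((N:ℝ)) = (n:ℝ)^2 := by rw [hN]; push_cast; ring
  have hLled : chainLength k v ≤ (N:ℝ) - 1 := by rw [hNcast]; exact hcon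
  have hsum_ge : ((N:ℝ) - 1) ≤ ∑ j ∈ range (N-1), dseq j := by
    have hc1 : ((N:ℝ) - 1) = ((N - 1 : ℕ) : ℝ) := by
      rw [Nat.cast_sub (by omega)]; norm_num
    calc ((N:ℝ) - 1) = ∑ _j ∈ range (N-1), (1:ℝ) := by
          rw [Finset.sum_const, card_range, nsmul_eq_mul, mul_one, hc1]
    _ ≤ ∑ j ∈ range (N-1), dseq j :=
        Finset.sum_le_sum fun j hj => hone j (by have := mem_range.mp hj; omega)
  have hFdle : ∑ j ∈ range (N-1), (F v (u (j+1)) - F v (u j)) ≤ (N:ℝ) - 1 := by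
    rw [htel]; linarith
  have hsum_le : ∑ j ∈ range (N-1), dseq j ≤ ∑ j ∈ range (N-1), (F v (u (j+1)) - F v (u j)) :=
    Finset.sum_le_sum fun j hj => hchordj j (by have := mem_range.mp hj; omega)
  have heqsum : ∑ j ∈ range (N-1), dseq j = ∑ j ∈ range (N-1), (F v (u (j+1)) - F v (u j)) := by
    linarith
  have hsum_d : ∑ j ∈ range (N-1), dseq j = (N:ℝ) - 1 := by linarith
  have heach : ∀ j, j + 1 < N → dseq j = F v (u (j+1)) - F v (u j) := by
    intro j hj
    by_contra hne2
    have hjm : j ∈ range (N-1) := mem_range.mpr (by omega)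
    have hlt : dseq j < F v (u (j+1)) - F v (u j) := lt_of_le_of_ne (hchordj j hj) hne2
    have := Finset.sum_lt_sum
      (fun i hi => hchordj i (by have := mem_range.mp hi; omega)) ⟨j, hjm, hlt⟩
    linarith
  have hone_each : ∀ j, j + 1 < N → dseq j = 1 := by
    intro j hj
    by_contra hne2
    have hjm : j ∈ range (N-1) := mem_range.mpr (by omega)
    have hlt : (1:ℝ) < dseq j := lt_of_le_of_ne (hone j hj) (fun h => hne2 h.symm)
    have hs : ∑ _j ∈ range (N-1), (1:ℝ) < ∑ j ∈ range (N-1), dseq j :=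
      Finset.sum_lt_sum (fun i hi => hone i (by have := mem_range.mp hi; omega)) ⟨j, hjm, hlt⟩
    rw [Finset.sum_const, card_range, nsmul_eq_mul, mul_one] at hs
    have hc1 : ((N - 1 : ℕ) : ℝ) = (N:ℝ) - 1 := by
      rw [Nat.cast_sub (by omega)]; norm_num
    rw [hc1] at hs
    linarith
  have hFd_each : ∀ j, j + 1 < N → F v (u (j+1)) - F v (u j) = 1 := by
    intro j hj
    rw [← heach j hj, hone_each j hj]
  -- straightness on each gap
  set Dv : ℕ → Pt :=
    fun j => pt ((c (j+1)).1:ℝ) ((c (j+1)).2:ℝ) - pt ((c j).1:ℝ) ((c j).2:ℝ) with hDv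
  have hDnorm : ∀ j, j + 1 < N → ‖Dv j‖ = 1 := by
    intro j hj
    have h1 := hone_each j hj
    rw [hdseq] at h1
    simp only at h1
    rw [hDv]
    simp only
    rw [← dist_eq_norm', h1]
  have hstraight : ∀ j, j + 1 < N → ∀ x, u j ≤ x → x ≤ u (j+1) →
      chainParam v x = pt ((c j).1:ℝ) ((c j).2:ℝ) + (F v x - F v (u j)) • Dv j := by
    intro j hj x hx1 hx2
    have hu0 : 0 ≤ u j := (hu0k j (by omega)).1
    have hx0 : 0 ≤ x := le_trans hu0 hx1
    have d1 : dist (chainParam v (u j)) (chainParam v x) ≤ F v x - F v (u j) :=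
      chord v _ _ hu0 hx1
    have d2 : dist (chainParam v x) (chainParam v (u (j+1))) ≤ F v (u (j+1)) - F v x :=
      chord v _ _ hx0 hx2
    rw [hPt j (by omega)] at d1
    rw [hPt (j+1) hj] at d2
    have htri : dseq j ≤ dist (pt ((c j).1:ℝ) ((c j).2:ℝ)) (chainParam v x) +
        dist (chainParam v x) (pt ((c (j+1)).1:ℝ) ((c (j+1)).2:ℝ)) := by
      rw [hdseq]
      exact dist_triangle _ _ _
    have hA : F v (u (j+1)) - F v (u j) = 1 := hFd_each j hj
    have h1 : dseq j = 1 := hone_each j hj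
    have e1 : dist (pt ((c j).1:ℝ) ((c j).2:ℝ)) (chainParam v x) = F v x - F v (u j) := by
      linarith
    have e2 : dist (chainParam v x) (pt ((c (j+1)).1:ℝ) ((c (j+1)).2:ℝ))
        = F v (u (j+1)) - F v x := by linarith
    have hdd : dist (pt ((c j).1:ℝ) ((c j).2:ℝ)) (chainParam v x) +
        dist (chainParam v x) (pt ((c (j+1)).1:ℝ) ((c (j+1)).2:ℝ)) =
        dist (pt ((c j).1:ℝ) ((c j).2:ℝ)) (pt ((c (j+1)).1:ℝ) ((c (j+1)).2:ℝ)) := by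
      have hd1 : dist (pt ((c j).1:ℝ) ((c j).2:ℝ)) (pt ((c (j+1)).1:ℝ) ((c (j+1)).2:ℝ))
          = dseq j := by rw [hdseq]
      rw [hd1, e1, e2]
      linarith
    have hWb := dist_add_dist_eq_iff.mp hdd
    obtain ⟨θ, hθmem, hθeq⟩ := hWb
    have hline : chainParam v x = pt ((c j).1:ℝ) ((c j).2:ℝ) + θ • Dv j := by
      rw [← hθeq, AffineMap.lineMap_apply_module]
      simp only [hDv]
      module
    have hθ0 : 0 ≤ θ := hθmem.1
    have hθval : θ = F v x - F v (u j) := by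
      rw [hline] at e1
      rw [dist_self_add_right, norm_smul, Real.norm_eq_abs, abs_of_nonneg hθ0,
        hDnorm j hj, mul_one] at e1
      exact e1
    rw [hline, hθval]
  -- edges inside a gap all point in the step direction
  have hdir : ∀ j, j + 1 < N → ∀ i : ℕ, u j < (i:ℝ) + 1 → (i:ℝ) < u (j+1) →
      v (i+1) - v i = ‖v (i+1) - v i‖ • Dv j := by
    intro j hj i hi1 hi2
    set a := max (i:ℝ) (u j) with ha
    set b := min ((i:ℝ)+1) (u (j+1)) with hb
    have hab : a < b := by
      rw [ha, hb, lt_min_iff, max_lt_iff, max_lt_iff]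
      refine ⟨⟨by linarith, hi1⟩, ⟨hi2, humono (by omega) hj⟩⟩
    have hia : (i:ℝ) ≤ a := le_max_left _ _
    have hbi : b ≤ (i:ℝ)+1 := min_le_left _ _
    have hja : u j ≤ a := le_max_right _ _
    have hbj : b ≤ u (j+1) := min_le_right _ _
    have hga := hstraight j hj a hja (le_trans hab.le hbj)
    have hgb := hstraight j hj b (le_trans hja hab.le) hbj
    have hedge : chainParam v b - chainParam v a = (b - a) • (v (i+1) - v i) :=
      sub_gamma_edge v i a b hia hbi hab.le
    have hFs : F v b - F v a = (b - a) * dist (v i) (v (i+1)) :=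
      F_sub_edge v i a b hia hbi hab.le
    rw [hga, hgb] at hedge
    have hD2 : (F v b - F v a) • Dv j = (b - a) • (v (i+1) - v i) := by
      rw [← hedge]
      module
    rw [hFs] at hD2
    have hba : b - a ≠ 0 := ne_of_gt (by linarith)
    have hcanc : (dist (v i) (v (i+1))) • Dv j = v (i+1) - v i := by
      apply smul_right_injective Pt hba
      simp only
      rw [smul_smul, hD2]
    rw [dist_eq_norm'] at hcanc
    exact hcanc.symm
  -- the finite sets of edges met by each gap
  set E : ℕ → Finset ℕ :=
    fun j => (range k).filter (fun i => u j < (i:ℝ)+1 ∧ (i:ℝ) < u (j+1)) with hE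
  have hEmem : ∀ j i, i ∈ E j ↔ (i < k ∧ u j < (i:ℝ)+1 ∧ (i:ℝ) < u (j+1)) := by
    intro j i
    rw [hE]
    simp only [mem_filter, mem_range]
  have hEne : ∀ j, j + 1 < N → ∃ i, i ∈ E j := by
    intro j hj
    refine ⟨⌊u j⌋₊, (hEmem _ _).mpr ⟨?_, ?_, ?_⟩⟩
    · rw [Nat.floor_lt (hu0k j (by omega)).1]
      calc u j < u (j+1) := humono (by omega) hj
      _ ≤ (k:ℝ) := (hu0k (j+1) hj).2
    · exact Nat.lt_floor_add_one _
    · calc (⌊u j⌋₊:ℝ) ≤ u j := Nat.floor_le (hu0k j (by omega)).1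
      _ < u (j+1) := humono (by omega) hj
  have hEorder : ∀ j j', j < j' → j' + 1 < N → ∀ i ∈ E j, ∀ i' ∈ E j', i ≤ i' := by
    intro j j' hjj hj' i hi i' hi'
    rw [hEmem] at hi hi'
    by_contra hlt
    push_neg at hlt
    have h1 : (i':ℝ) + 1 ≤ (i:ℝ) := by exact_mod_cast hlt
    have h2 : u (j+1) ≤ u j' := humono' (by omega) (by omega)
    have h3 := hi.2.2
    have h4 := hi'.2.1
    linarith
  have hdirE : ∀ j, j + 1 < N → ∀ i ∈ E j, v (i+1) - v i = ‖v (i+1) - v i‖ • Dv j := by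
    intro j hj i hi
    rw [hEmem] at hi
    exact hdir j hj i hi.2.1 hi.2.2
  have hDeq : ∀ j j', j + 1 < N → j' + 1 < N → ∀ i, i ∈ E j → i ∈ E j' → Dv j = Dv j' := by
    intro j j' hj hj' i hi hi'
    have h1 := hdirE j hj i hi
    have h2 := hdirE j' hj' i hi'
    have hik : i < k := ((hEmem j i).mp hi).1
    have hwne : v (i+1) - v i ≠ 0 := sub_ne_zero.mpr (Ne.symm (hne i hik))
    have hnz : ‖v (i+1) - v i‖ ≠ 0 := norm_ne_zero_iff.mpr hwne
    have := smul_right_injective Pt hnz (by rw [← h1, ← h2] : ‖v (i+1) - v i‖ • Dv j = ‖v (i+1) - v i‖ • Dv j')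
    exact this
  set φ : ℕ → ℕ := fun j => sInf {i : ℕ | i ∈ E j} with hφ
  have hφmem : ∀ j, j + 1 < N → φ j ∈ E j := by
    intro j hj
    obtain ⟨i, hi⟩ := hEne j hj
    exact Nat.sInf_mem (⟨i, hi⟩ : {i : ℕ | i ∈ E j}.Nonempty)
  set TS := (Ico 1 (N-1)).filter (fun j => Dv j ≠ Dv (j-1)) with hTS
  have key : ∀ j j', 1 ≤ j → j < N-1 → 1 ≤ j' → j' < N-1 → Dv j' ≠ Dv (j'-1) →
      j < j' → φ j ≠ φ j' := by
    intro j j' hj1 hj2 hj1' hj2' hD' hlt hcc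
    have hjN : j + 1 < N := by omega
    have hjN' : j' + 1 < N := by omega
    have hjm1N : (j'-1) + 1 < N := by omega
    have hmemj := hφmem j hjN
    have hmemj' := hφmem j' hjN'
    rw [hcc] at hmemj
    have hmemm : φ j' ∈ E (j'-1) := by
      rcases eq_or_lt_of_le (show j ≤ j'-1 by omega) with heq3 | hlt3
      · rw [← heq3]; exact hmemj
      · have hm' := hφmem (j'-1) hjm1N
        have h1 : φ j' ≤ φ (j'-1) := hEorder j (j'-1) hlt3 hjm1N _ hmemj _ hm'
        have h2 : φ (j'-1) ≤ φ j' := hEorder (j'-1) j' (by omega) hjN' _ hm' _ hmemj'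
        have h3 : φ (j'-1) = φ j' := le_antisymm h2 h1
        rw [h3] at hm'
        exact hm'
    exact hD' (hDeq j' (j'-1) hjN' hjm1N (φ j') hmemj' hmemm)
  have hTSle : TS.card ≤ k - 1 := by
    have hcard : TS.card ≤ (Finset.Icc 1 (k-1)).card := by
      apply card_le_card_of_injOn φ
      · intro j hj
        rw [Finset.mem_coe, hTS, mem_filter, mem_Ico] at hj
        obtain ⟨⟨hj1, hj2⟩, hjD⟩ := hj
        have hjN : j + 1 < N := by omega
        have hjN' : (j-1) + 1 < N := by omega
        have hmem := hφmem j hjN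
        have hik : φ j < k := ((hEmem j (φ j)).mp hmem).1
        have hmem' := hφmem (j-1) hjN'
        have hle : φ (j-1) ≤ φ j := hEorder (j-1) j (by omega) hjN (φ (j-1)) hmem' (φ j) hmem
        have hne2 : φ (j-1) ≠ φ j := by
          intro hcc
          rw [hcc] at hmem'
          exact hjD (hDeq j (j-1) hjN hjN' (φ j) hmem hmem')
        rw [Finset.mem_coe, mem_Icc]
        omega
      · intro j hj j' hj' heq2
        rw [Finset.mem_coe, hTS, mem_filter, mem_Ico] at hj hj'
        rcases lt_trichotomy j j' with h | h | h
        · exact absurd heq2 (key j j' hj.1.1 hj.1.2 hj'.1.1 hj'.1.2 hj'.2 h)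
        · exact h
        · exact absurd heq2.symm (key j' j hj'.1.1 hj'.1.2 hj.1.1 hj.1.2 hj.2 h)
    rw [Nat.card_Icc] at hcard
    omega
  -- the combinatorial lower bound
  have hstepZ : ∀ j, j + 1 < n^2 →
      (((c (j+1)).1 : ℤ) - (c j).1)^2 + (((c (j+1)).2 : ℤ) - (c j).2)^2 = 1 := by
    intro j hj
    have h1 : dseq j = 1 := hone_each j hj
    rw [hdseq] at h1
    simp only at h1
    have h2 : (((c j).1:ℝ) - ((c (j+1)).1:ℝ))^2 + (((c j).2:ℝ) - ((c (j+1)).2:ℝ))^2 = 1 := by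
      have h3 := dist_sq_pt ((c j).1:ℝ) ((c j).2:ℝ) ((c (j+1)).1:ℝ) ((c (j+1)).2:ℝ)
      rw [h1] at h3
      rw [← h3]
      norm_num
    have h4 : ((((c (j+1)).1 : ℤ) - (c j).1 : ℤ) : ℝ)^2 + ((((c (j+1)).2 : ℤ) - (c j).2 : ℤ) : ℝ)^2 = 1 := by
      push_cast
      nlinarith [h2]
    exact_mod_cast h4
  have hcomb := comb n hn c hcrange hcsurj hstepZ
  have hsub : (Finset.Ico 1 (n^2 - 1)).filter
      (fun j => ¬(((c (j+1)).1 : ℤ) - (c j).1 = ((c j).1 : ℤ) - ((c (j-1)).1) ∧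
                 ((c (j+1)).2 : ℤ) - (c j).2 = ((c j).2 : ℤ) - ((c (j-1)).2))) ⊆ TS := by
    intro j hj
    rw [mem_filter] at hj
    rw [hTS, mem_filter]
    refine ⟨hj.1, fun hDD => hj.2 ?_⟩
    have e0 : Dv j 0 = Dv (j-1) 0 := by rw [hDD]
    have e1 : Dv j 1 = Dv (j-1) 1 := by rw [hDD]
    rw [hDv] at e0 e1
    simp only [pt_sub_apply0] at e0
    simp only [pt_sub_apply1] at e1
    have hj1 : (j - 1) + 1 = j := by
      have := (mem_Ico.mp hj.1).1; omega
    rw [hj1] at e0 e1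
    constructor
    · exact_mod_cast e0
    · exact_mod_cast e1
  have hfin := le_trans hcomb (card_le_card hsub)
  have := le_trans hfin hTSle
  omega
end
end
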